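/- arXiv:math/0306354 — 9 statements merged into one kernel-verified Lean document; each statement's English description precedes it below -/
import Mathlib

section
/- If K has positive Lebesgue measure, then K tiles the real line by integer translations: there exists a set T of integers such that ℝ = ⋃_{t ∈ T} (K + t) and Leb((K + s) ∩ (K + t)) = 0 for all distinct s, t ∈ T. (This is the paper's Tiling Theorem in the case f(z) = z^d: if the attractor of the lifted iterated function system has positive measure, it tiles the preimage of the Julia set under deck transformations.) -/
open MeasureTheory Set Filter Metric Function
open scoped ENNReal Pointwise Topology

/-!
The `d` pieces `gᵢ(K)` each have measure `volume K / d` and cover `K`, so they overlap only in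
null sets; iterating, `d ^ k • K` is an essentially disjoint union of integer translates of `K`.
Take a Lebesgue density point `x₀ ∈ K` and recentre the blow-ups `d ^ k • K` at an integer
`m k` so that `d ^ k * x₀ - m k ∈ K`: the recentred blow-ups are unions of integer translates
of `K` that fill any fixed ball up to a null set in the limit. An ultrafilter limit `T` of the
sets of translates that occur keeps the essential disjointness, and `⋃ t ∈ T, K + t` is
closed (the translates are locally finite) and conull, hence all of `ℝ`.
-/

theorem Finset.pairwise_aedisjoint_of_sum_measure_le {α ι : Type*} [MeasurableSpace α]
    {μ : Measure α} {s : Finset ι} {A : ι → Set α} (hA : ∀ i ∈ s, NullMeasurableSet (A i) μ)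
    (hsum : ∑ i ∈ s, μ (A i) ≤ μ (⋃ i ∈ s, A i)) (hfin : μ (⋃ i ∈ s, A i) ≠ ∞) :
    (s : Set ι).Pairwise (AEDisjoint μ on A) := by
  classical
  intro i hi j hj hij
  rw [Finset.mem_coe] at hi hj
  set B := ⋃ l ∈ s.erase i, A l
  have hU : ⋃ l ∈ s, A l = B ∪ A i := by
    conv_lhs => rw [← Finset.insert_erase hi, Finset.set_biUnion_insert]
    exact Set.union_comm _ _
  have key : μ (B ∪ A i) + μ (B ∩ A i) ≤ μ (B ∪ A i) + 0 := calc
    μ (B ∪ A i) + μ (B ∩ A i) = μ B + μ (A i) := measure_union_add_inter₀ _ (hA i hi)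
    _ ≤ ∑ l ∈ s.erase i, μ (A l) + μ (A i) := by gcongr; exact measure_biUnion_finset_le _ _
    _ = ∑ l ∈ s, μ (A l) := Finset.sum_erase_add _ _ hi
    _ ≤ μ (B ∪ A i) + 0 := by rw [add_zero, ← hU]; exact hsum
  have hBi : μ (B ∩ A i) = 0 :=
    nonpos_iff_eq_zero.1 <| (ENNReal.add_le_add_iff_left (hU ▸ hfin)).1 key
  have hij : A i ∩ A j ⊆ B ∩ A i := fun x hx =>
    ⟨Set.mem_biUnion (Finset.mem_erase.2 ⟨hij.symm, hj⟩) hx.2, hx.1⟩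
  exact measure_mono_null hij hBi

theorem volume_image_mul_add (a b : ℝ) (s : Set ℝ) :
    volume ((fun x => a * x + b) '' s) = ENNReal.ofReal |a| * volume s := by
  have : (fun x => a * x + b) '' s = (fun y => y + b) '' (a • s) := by
    rw [← image_smul, image_image]; rfl
  rw [this, image_add_right, measure_preimage_add_right, Measure.addHaar_smul]
  simp

theorem volume_image_add_inter_image_add (K : Set ℝ) (s t c : ℝ) :
    volume ((fun x => x + (s + c)) '' K ∩ (fun x => x + (t + c)) '' K) =
      volume ((fun x => x + s) '' K ∩ (fun x => x + t) '' K) := by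
  have : (fun x => x + (s + c)) '' K ∩ (fun x => x + (t + c)) '' K =
      (fun x => x + -c) ⁻¹' ((fun x => x + s) '' K ∩ (fun x => x + t) '' K) := by
    simp only [image_add_right, preimage_inter, preimage_preimage, neg_add, add_assoc,
      add_comm (-c)]
  rw [this, measure_preimage_add_right]

theorem exists_finset_card_le_image_mul_pow_eq {ι : Type*} [Fintype ι] {K : Set ℝ} {a : ℤ}
    {n : ι → ℤ} (h : (fun x => (a : ℝ) * x) '' K = ⋃ i, (fun x => x + (n i : ℝ)) '' K) (k : ℕ) :
    ∃ S : Finset ℤ, S.card ≤ Fintype.card ι ^ k ∧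
      (fun x => (a : ℝ) ^ k * x) '' K = ⋃ m ∈ S, (fun x => x + (m : ℝ)) '' K := by
  classical
  induction k with
  | zero => exact ⟨{0}, by simp, by simp⟩
  | succ k ih =>
    obtain ⟨S, hcard, hS⟩ := ih
    refine ⟨(Finset.univ ×ˢ S).image fun p => n p.1 + a * p.2, ?_, ?_⟩
    · calc _ ≤ (Finset.univ ×ˢ S).card := Finset.card_image_le
        _ ≤ Fintype.card ι ^ (k + 1) := by
          rw [Finset.card_product, Finset.card_univ, pow_succ']
          gcongr
    · have hmul : ∀ m : ℤ, (fun x => (a : ℝ) * x) '' ((fun x => x + (m : ℝ)) '' K) =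
          ⋃ i, (fun x => x + ((n i + a * m : ℤ) : ℝ)) '' K := by
        intro m
        have : (fun x => (a : ℝ) * x) '' ((fun x => x + (m : ℝ)) '' K) =
            (fun x => x + (a * m : ℝ)) '' ((fun x => (a : ℝ) * x) '' K) := by
          simp only [image_image, mul_add]
        rw [this, h, image_iUnion]
        simp only [image_image, add_assoc, Int.cast_add, Int.cast_mul]
      have hpow : (fun x => (a : ℝ) ^ (k + 1) * x) '' K =
          (fun x => (a : ℝ) * x) '' ((fun x => (a : ℝ) ^ k * x) '' K) := by
        simp only [image_image, pow_succ', mul_assoc]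
      rw [hpow, hS, image_iUnion₂, Finset.set_biUnion_finset_image]
      ext z
      simp only [hmul, mem_iUnion, Finset.mem_product, Finset.mem_univ, true_and, exists_prop,
        Prod.exists]
      exact ⟨fun ⟨m, hm, i, hz⟩ => ⟨i, m, hm, hz⟩, fun ⟨i, m, hm, hz⟩ => ⟨m, hm, i, hz⟩⟩

theorem exists_finset_image_mul_pow_eq_biUnion_pairwise_aedisjoint {ι : Type*} [Fintype ι]
    {K : Set ℝ} (hK : IsCompact K) {d : ℕ} (hι : Fintype.card ι ≤ d) {n : ι → ℤ}
    (h : (fun x => (d : ℝ) * x) '' K = ⋃ i, (fun x => x + (n i : ℝ)) '' K) (k : ℕ) :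
    ∃ S : Finset ℤ, (fun x => (d : ℝ) ^ k * x) '' K = ⋃ m ∈ S, (fun x => x + (m : ℝ)) '' K ∧
      (S : Set ℤ).Pairwise (AEDisjoint volume on fun m : ℤ => (fun x => x + (m : ℝ)) '' K) := by
  obtain ⟨S, hcard, hS⟩ := exists_finset_card_le_image_mul_pow_eq (a := d) (by exact_mod_cast h) k
  push_cast at hS
  refine ⟨S, hS, Finset.pairwise_aedisjoint_of_sum_measure_le
    (fun m _ => (hK.image (by fun_prop)).measurableSet.nullMeasurableSet) ?_ ?_⟩
  · have hvol : ∀ m : ℤ, volume ((fun x => x + (m : ℝ)) '' K) = volume K := fun m => by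
      rw [image_add_right, measure_preimage_add_right]
    have hvolK : volume ((fun x => (d : ℝ) ^ k * x) '' K) = (d : ℝ≥0∞) ^ k * volume K := by
      simpa using volume_image_mul_add ((d : ℝ) ^ k) 0 K
    rw [← hS, hvolK, Finset.sum_congr rfl fun m _ => hvol m, Finset.sum_const, nsmul_eq_mul]
    gcongr
    exact_mod_cast hcard.trans (Nat.pow_le_pow_left hι k)
  · rw [← hS]
    exact (hK.image (by fun_prop)).measure_lt_top.ne

theorem image_mul_sub_subset_biUnion {K : Set ℝ} {a : ℝ} {S : Finset ℤ}
    (h : (fun x => a * x) '' K = ⋃ m ∈ S, (fun x => x + (m : ℝ)) '' K) (c : ℤ) :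
    (fun x => a * x - c) '' K ⊆ ⋃ t ∈ {t : ℤ | t + c ∈ S}, (fun x => x + (t : ℝ)) '' K := by
  rintro _ ⟨x, hx, rfl⟩
  obtain ⟨m, hm, y, hy, hyx⟩ := mem_iUnion₂.1 (h ▸ mem_image_of_mem _ hx)
  exact mem_biUnion (show m - c + c ∈ S by simpa) ⟨y, hy, by push_cast; linarith⟩

theorem exists_mem_tendsto_measure_compl_inter_div {β : Type*} [MetricSpace β]
    [MeasurableSpace β] [BorelSpace β] [SecondCountableTopology β] [HasBesicovitchCovering β]
    (μ : Measure β) [IsLocallyFiniteMeasure μ] {s : Set β} (hs : MeasurableSet s) (h : μ s ≠ 0) :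
    ∃ x ∈ s, Tendsto (fun r => μ (sᶜ ∩ closedBall x r) / μ (closedBall x r)) (𝓝[>] 0) (𝓝 0) := by
  have : (ae (μ.restrict s)).NeBot := ae_neBot.2 (by rwa [Ne, Measure.restrict_eq_zero])
  obtain ⟨x, hx, hxs⟩ := ((ae_restrict_of_ae
    (Besicovitch.ae_tendsto_measure_inter_div_of_measurableSet μ hs.compl)).and
    (ae_restrict_mem hs)).exists
  exact ⟨x, hxs, by simpa [hxs] using hx⟩

theorem volume_closedBall_diff_image_mul_sub_le {K : Set ℝ} {x₀ R D P b : ℝ} (hR : 0 < R)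
    (hP : 0 < P) (hD : dist (P * x₀ - b) x₀ ≤ D) :
    volume (closedBall x₀ R \ (fun x => P * x - b) '' K) ≤
      ENNReal.ofReal (2 * (R + D)) * (volume (Kᶜ ∩ closedBall x₀ ((R + D) / P)) /
        volume (closedBall x₀ ((R + D) / P))) := by
  set ρ := (R + D) / P
  have hρ : 0 < ρ := div_pos (by linarith [dist_nonneg.trans hD]) hP
  have hsub : closedBall x₀ R \ (fun x => P * x - b) '' K ⊆
      (fun x => P * x + -b) '' (Kᶜ ∩ closedBall x₀ ρ) := by
    rintro z ⟨hz, hzK⟩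
    have hzw : P * ((z + b) / P) - b = z := by field_simp; ring
    refine ⟨(z + b) / P, ⟨fun hw => hzK ⟨_, hw, hzw⟩, ?_⟩, by simpa [← sub_eq_add_neg] using hzw⟩
    rw [mem_closedBall, Real.dist_eq] at hz ⊢
    rw [Real.dist_eq] at hD
    rw [le_div_iff₀ hP, ← abs_of_pos hP, ← abs_mul, abs_of_pos hP]
    calc |((z + b) / P - x₀) * P| = |(z - x₀) + (x₀ - (P * x₀ - b))| := by
          congr 1; field_simp; ring
      _ ≤ R + D := (abs_add_le _ _).trans (add_le_add hz (by rwa [abs_sub_comm]))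
  have hball : volume (closedBall x₀ ρ) = ENNReal.ofReal (2 * ρ) := by
    rw [Real.volume_closedBall, two_mul]
  calc _ ≤ volume ((fun x => P * x + -b) '' (Kᶜ ∩ closedBall x₀ ρ)) := measure_mono hsub
    _ = ENNReal.ofReal P * volume (Kᶜ ∩ closedBall x₀ ρ) := by
      rw [volume_image_mul_add, abs_of_pos hP]
    _ = ENNReal.ofReal P * volume (closedBall x₀ ρ) *
        (volume (Kᶜ ∩ closedBall x₀ ρ) / volume (closedBall x₀ ρ)) := by
      rw [mul_assoc, ENNReal.mul_div_cancel (by simp [hball, hρ])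
        (by rw [hball]; exact ENNReal.ofReal_ne_top)]
    _ = _ := by
      rw [hball, ← ENNReal.ofReal_mul hP.le]
      congr 2
      simp only [ρ]
      field_simp

theorem tendsto_volume_closedBall_diff_image_mul_sub {K : Set ℝ} {x₀ R D : ℝ}
    (hx₀ : Tendsto (fun r => volume (Kᶜ ∩ closedBall x₀ r) / volume (closedBall x₀ r))
      (𝓝[>] 0) (𝓝 0))
    (hR : 0 < R) {P b : ℕ → ℝ} (hP : Tendsto P atTop atTop)
    (hD : ∀ k, dist (P k * x₀ - b k) x₀ ≤ D) :
    Tendsto (fun k => volume (closedBall x₀ R \ (fun x => P k * x - b k) '' K)) atTop (𝓝 0) := by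
  have hRD : 0 < R + D := by linarith [dist_nonneg.trans (hD 0)]
  have hρ : Tendsto (fun k => (R + D) / P k) atTop (𝓝[>] 0) :=
    tendsto_nhdsWithin_iff.2 ⟨tendsto_const_nhds.div_atTop hP,
      (hP.eventually_gt_atTop 0).mono fun k hk => div_pos hRD hk⟩
  have hlim := ENNReal.Tendsto.const_mul (hx₀.comp hρ)
    (Or.inr (ENNReal.ofReal_ne_top (r := 2 * (R + D))))
  rw [mul_zero] at hlim
  refine tendsto_of_tendsto_of_tendsto_of_le_of_le' tendsto_const_nhds hlim
    (Eventually.of_forall fun _ => zero_le) ?_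
  filter_upwards [hP.eventually_gt_atTop 0] with k hk
  exact volume_closedBall_diff_image_mul_sub_le hR hk (hD k)

theorem IsCompact.finite_setOf_image_add_intCast_inter_nonempty {K B : Set ℝ} (hK : IsCompact K)
    (hB : IsCompact B) : {t : ℤ | ((fun x : ℝ => x + t) '' K ∩ B).Nonempty}.Finite := by
  have hfin : {t : ℤ | (t : ℝ) ∈ B + -K}.Finite := by
    simpa using Filter.eventually_cofinite.1
      (Int.tendsto_coe_cofinite.eventually (hB.add hK.neg).compl_mem_cocompact)
  refine hfin.subset ?_
  rintro t ⟨_, ⟨y, hy, rfl⟩, hyt⟩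
  exact ⟨y + t, hyt, -y, by simpa using hy, by ring⟩

theorem IsCompact.locallyFinite_image_add_intCast {K : Set ℝ} (hK : IsCompact K) :
    LocallyFinite fun t : ℤ => (fun x : ℝ => x + t) '' K := fun z =>
  ⟨closedBall z 1, closedBall_mem_nhds z one_pos,
    hK.finite_setOf_image_add_intCast_inter_nonempty (isCompact_closedBall z 1)⟩

theorem IsCompact.isClosed_biUnion_image_add_intCast {K : Set ℝ} (hK : IsCompact K) (T : Set ℤ) :
    IsClosed (⋃ t ∈ T, (fun x : ℝ => x + t) '' K) := by
  rw [biUnion_eq_iUnion]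
  exact (hK.locallyFinite_image_add_intCast.comp_injective Subtype.val_injective).isClosed_iUnion
    fun t => (hK.image (by fun_prop)).isClosed

theorem IsCompact.eventually_inter_biUnion_subset_biUnion {ι : Type*} {K B : Set ℝ}
    (hK : IsCompact K) (hB : IsCompact B) (A : ι → Set ℤ) (U : Ultrafilter ι) :
    ∀ᶠ k in U, B ∩ ⋃ t ∈ A k, (fun x : ℝ => x + t) '' K ⊆
      ⋃ t ∈ {t | ∀ᶠ k in U, t ∈ A k}, (fun x : ℝ => x + t) '' K := by
  have hF := hK.finite_setOf_image_add_intCast_inter_nonempty hB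
  have : ∀ᶠ k in U, ∀ t ∈ {t : ℤ | ((fun x : ℝ => x + t) '' K ∩ B).Nonempty},
      t ∈ A k → ∀ᶠ k in U, t ∈ A k := by
    refine (eventually_all_finite hF).2 fun t _ => ?_
    by_cases ht : ∀ᶠ k in U, t ∈ A k
    · exact Eventually.of_forall fun _ _ => ht
    · exact (Ultrafilter.eventually_not.2 ht).mono fun k hk hk' => absurd hk' hk
  filter_upwards [this] with k hk
  rintro z ⟨hzB, hz⟩
  obtain ⟨t, ht, hzt⟩ := mem_iUnion₂.1 hz
  exact mem_biUnion (hk t ⟨z, hzt, hzB⟩ ht) hzt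

theorem eq_univ_of_isClosed_of_measure_closedBall_diff {α : Type*} [PseudoMetricSpace α]
    [MeasurableSpace α] {μ : Measure α} [μ.IsOpenPosMeasure] {W : Set α} (hW : IsClosed W)
    (x : α) (h : ∀ R > 0, μ (closedBall x R \ W) = 0) : W = univ := by
  by_contra hne
  obtain ⟨z, hz⟩ := (ne_univ_iff_exists_notMem W).1 hne
  obtain ⟨δ, hδ, hball⟩ := Metric.isOpen_iff.1 hW.isOpen_compl z hz
  have hsub : ball z δ ⊆ closedBall x (dist z x + δ) \ W := fun w hw =>
    ⟨mem_closedBall.2 (by linarith [dist_triangle w z x, mem_ball.1 hw]), hball hw⟩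
  exact (measure_ball_pos μ z hδ).ne' (measure_mono_null hsub (h _ (by positivity)))

theorem tiling_of_pos_measure_pow_d_general (d : ℕ) (hd : 2 ≤ d) (n : Fin d → ℤ)
    (K : Set ℝ) (hc : IsCompact K)
    (hK : K = ⋃ i : Fin d, (fun x : ℝ => (x + (n i : ℝ)) / (d : ℝ)) '' K)
    (hpos : 0 < volume K) :
    ∃ T : Set ℤ,
      (⋃ t ∈ T, (fun x : ℝ => x + (t : ℝ)) '' K) = Set.univ ∧
      ∀ s ∈ T, ∀ t ∈ T, s ≠ t →
        volume (((fun x : ℝ => x + (s : ℝ)) '' K) ∩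
          ((fun x : ℝ => x + (t : ℝ)) '' K)) = 0 := by
  have hd0 : (d : ℝ) ≠ 0 := by positivity
  have hdK : (fun x => (d : ℝ) * x) '' K = ⋃ i, (fun x => x + (n i : ℝ)) '' K := by
    conv_lhs => rw [hK]
    simp only [image_iUnion, image_image, mul_div_cancel₀ _ hd0]
  choose S hS hSdisj using exists_finset_image_mul_pow_eq_biUnion_pairwise_aedisjoint hc
    (Fintype.card_fin d).le hdK
  obtain ⟨x₀, hx₀K, hx₀⟩ := exists_mem_tendsto_measure_compl_inter_div volume hc.measurableSet
    hpos.ne'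
  have hm : ∀ k, ∃ m : ℤ, (d : ℝ) ^ k * x₀ - m ∈ K := fun k => by
    obtain ⟨m, -, y, hy, hyx⟩ := mem_iUnion₂.1 (hS k ▸ mem_image_of_mem _ hx₀K)
    exact ⟨m, by rwa [← hyx, add_sub_cancel_right]⟩
  choose m hmK using hm
  set A : ℕ → Set ℤ := fun k => {t | t + m k ∈ S k}
  set U := Ultrafilter.of (atTop : Filter ℕ)
  refine ⟨{t | ∀ᶠ k in U, t ∈ A k}, ?_, ?_⟩
  · refine eq_univ_of_isClosed_of_measure_closedBall_diff (μ := volume)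
      (hc.isClosed_biUnion_image_add_intCast _) x₀ fun R hR => le_antisymm ?_ zero_le
    have hlim := tendsto_volume_closedBall_diff_image_mul_sub hx₀ hR
      (tendsto_pow_atTop_atTop_of_one_lt (by exact_mod_cast hd)) fun k =>
        dist_le_diam_of_mem hc.isBounded (hmK k) hx₀K
    refine ge_of_tendsto (hlim.mono_left (Ultrafilter.of_le _)) ?_
    filter_upwards [hc.eventually_inter_biUnion_subset_biUnion (isCompact_closedBall x₀ R) A U]
      with k hk
    exact measure_mono fun z hz => ⟨hz.1, fun hzW =>
      hz.2 (hk ⟨hz.1, image_mul_sub_subset_biUnion (hS k) (m k) hzW⟩)⟩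
  · intro s hs t ht hst
    obtain ⟨k, hsk, htk⟩ := (hs.and ht).exists
    rw [← volume_image_add_inter_image_add K s t (m k)]
    exact_mod_cast hSdisj k hsk htk (by simpa using hst)

/-- **Tiling Theorem** for `f(z) = z^d`: if the attractor `K` of the lifted
iterated function system `gᵢ(x) = (x + nᵢ)/d` has positive Lebesgue measure,
then `K` tiles the real line by integer translations. -/
theorem tiling_of_pos_measure_pow_d (d : ℕ) (hd : 2 ≤ d) (n : Fin d → ℤ)
    (K : Set ℝ) (hne : K.Nonempty) (hc : IsCompact K)
    (hK : K = ⋃ i : Fin d, (fun x : ℝ => (x + (n i : ℝ)) / (d : ℝ)) '' K)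
    (hpos : 0 < volume K) :
    ∃ T : Set ℤ,
      (⋃ t ∈ T, (fun x : ℝ => x + (t : ℝ)) '' K) = Set.univ ∧
      ∀ s ∈ T, ∀ t ∈ T, s ≠ t →
        volume (((fun x : ℝ => x + (s : ℝ)) '' K) ∩
          ((fun x : ℝ => x + (t : ℝ)) '' K)) = 0 :=
  tiling_of_pos_measure_pow_d_general d hd n K hc hK hpos
end

section
/- There exists a natural number n (the multiplicity) such that: Leb(K) = n; for Haar-almost every point p of the unit circle S¹ the fiber π^{-1}(p) is finite with exactly n elements; and for every point p of S¹ the fiber π^{-1}(p) has at least n elements. (This is the paper's Multiplicity Theorem in the case f(z) = z^d.) -/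
open MeasureTheory

/-- The Haar probability measure on the unit circle `S¹ ⊆ ℂ`, realized as the
pushforward of Lebesgue measure on `[0,1)` under `x ↦ exp(2πix)`. -/
noncomputable def circleMeasure : Measure ℂ :=
  Measure.map (fun x : ℝ => Complex.exp (2 * Real.pi * Complex.I * (x : ℂ)))
    (volume.restrict (Set.Ico (0 : ℝ) 1))

/-- The coding map `π : {1,…,d}^ℕ → S¹`, `π(ω) = exp(2πi ∑ₖ n_{ω_k} d^{-k})`. -/
noncomputable def codingMap (d : ℕ) (n : Fin d → ℤ) (ω : ℕ → Fin d) : ℂ :=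
  Complex.exp (2 * Real.pi * Complex.I *
    ((∑' k : ℕ, (n (ω k) : ℝ) / (d : ℝ) ^ (k + 1) : ℝ) : ℂ))

/-!
Work on the additive circle `ℝ/ℤ`. The coding series `∑ₖ n_{ω_k} d^{-(k+1)}` maps `{1,…,d}^ℕ`
onto `K`, and the push-forward `ν` of `Leb|K` to the circle has density the fiber count
`#(K ∩ (t + ℤ))`. Since `K = ⋃ gᵢ(K)` and each `gᵢ` divides Lebesgue measure by `d`, we get
`ν((d • ·)⁻¹ A) ≤ ν(A)` for every `A`, hence equality, both sides being finite measures of the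
same mass. The map `x ↦ d • x` is ergodic, so the density of this invariant measure is almost
everywhere a constant `m`, and integrating gives `Leb(K) = m`. As `K` is compact, the fiber count
is upper semicontinuous, hence `≥ m` everywhere. Finally, the coding map sends each fiber of `π`
onto the corresponding fiber of `K`, injectively unless some `dᵏ • p` lies in the image of the
overlaps `gᵢ(K) ∩ gⱼ(K)`; these are null because the masses `Leb(K)/d` of the pieces add up to
`Leb(K)`.
-/

open Set Filter Topology Metric
open scoped ENNReal NNReal Pointwise

theorem Metric.infDist_le_mul_of_lipschitzWith {X : Type*} [MetricSpace X] {g : X → X}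
    {c : ℝ≥0} (hg : LipschitzWith c g) {B : Set X} (hB : B.Nonempty) (hgB : MapsTo g B B)
    (x : X) : infDist (g x) B ≤ c * infDist x B := by
  have := hB.to_subtype
  rw [infDist_eq_iInf (x := x), Real.mul_iInf_of_nonneg c.coe_nonneg]
  exact le_ciInf fun b => (infDist_le_dist_of_mem (hgB b.2)).trans (hg.dist_le_mul x b)

theorem subset_of_forall_mem_image_of_mapsTo {X ι : Type*} [MetricSpace X] {g : ι → X → X}
    {c : ℝ≥0} (hc : c < 1) (hg : ∀ i, LipschitzWith c (g i)) {A B : Set X}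
    (hA : Bornology.IsBounded A) (hB : IsClosed B) (hBne : B.Nonempty)
    (hAB : ∀ y ∈ A, ∃ i, ∃ y' ∈ A, g i y' = y) (hgB : ∀ i, MapsTo (g i) B B) : A ⊆ B := by
  obtain ⟨b, hb⟩ := hBne
  obtain ⟨R, hR⟩ := hA.subset_closedBall b
  set S := sSup ((infDist · B) '' A)
  have hbdd : BddAbove ((infDist · B) '' A) :=
    ⟨R, forall_mem_image.2 fun y hy => (infDist_le_dist_of_mem hb).trans (hR hy)⟩
  have hle : ∀ y ∈ A, infDist y B ≤ c * S := by
    intro y hy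
    obtain ⟨i, y', hy', rfl⟩ := hAB y hy
    exact (infDist_le_mul_of_lipschitzWith (hg i) ⟨b, hb⟩ (hgB i) y').trans
      (mul_le_mul_of_nonneg_left (le_csSup hbdd (mem_image_of_mem _ hy')) c.coe_nonneg)
  intro y hy
  have hyS : infDist y B ≤ S := le_csSup hbdd (mem_image_of_mem _ hy)
  have hS : S ≤ 0 := by
    have hSc : S ≤ c * S := csSup_le (Nonempty.image _ ⟨y, hy⟩) (forall_mem_image.2 hle)
    have hc' : (c : ℝ) < 1 := hc
    nlinarith [infDist_nonneg (x := y) (s := B)]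
  rw [hB.mem_iff_infDist_zero ⟨b, hb⟩]
  exact le_antisymm (hyS.trans hS) infDist_nonneg

section

variable {α : Type*} [MeasurableSpace α] {μ : Measure α}

theorem MeasureTheory.pairwise_aedisjoint_of_sum_le_measure_iUnion {ι : Type*} [Fintype ι]
    {s : ι → Set α} (hs : ∀ i, MeasurableSet (s i)) (h : ∑ i, μ (s i) ≤ μ (⋃ i, s i))
    (hfin : μ (⋃ i, s i) ≠ ∞) : Pairwise (Function.onFun (AEDisjoint μ) s) := by
  classical
  intro i j hij
  have hsub : ⋃ l, s l ⊆ (s i ∪ s j) ∪ ⋃ l ∈ ({i, j} : Finset ι)ᶜ, s l := by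
    refine iUnion_subset fun l => ?_
    by_cases hl : l ∈ ({i, j} : Finset ι)
    · rcases Finset.mem_insert.1 hl with rfl | hl
      · exact subset_union_left.trans subset_union_left
      · rw [Finset.mem_singleton.1 hl]
        exact subset_union_right.trans subset_union_left
    · exact (subset_biUnion_of_mem (u := s) (Finset.mem_coe.2 (Finset.mem_compl.2 hl))).trans
        subset_union_right
  have key : μ (⋃ l, s l) + μ (s i ∩ s j) ≤ μ (⋃ l, s l) + 0 := calc
    μ (⋃ l, s l) + μ (s i ∩ s j)
      ≤ μ (s i ∪ s j) + μ (s i ∩ s j) + ∑ l ∈ ({i, j} : Finset ι)ᶜ, μ (s l) := by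
        grw [measure_mono hsub, measure_union_le, measure_biUnion_finset_le]
        exact (add_right_comm _ _ _).le
    _ = ∑ l, μ (s l) := by
        rw [measure_union_add_inter _ (hs j), ← Finset.sum_pair (f := fun l => μ (s l)) hij,
          Finset.sum_add_sum_compl]
    _ ≤ μ (⋃ l, s l) + 0 := by rwa [add_zero]
  exact nonpos_iff_eq_zero.1 (ENNReal.le_of_add_le_add_left hfin key)

variable [IsFiniteMeasure μ] {T : α → α} {φ : α → ℝ≥0∞}

theorem MeasureTheory.MeasurePreserving.preimage_setOf_lt_ae_eq_of_withDensity
    (hT : MeasurePreserving T μ μ) (hφ : Measurable φ) (hφ_fin : ∫⁻ x, φ x ∂μ ≠ ∞)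
    (hinv : MeasurePreserving T (μ.withDensity φ) (μ.withDensity φ)) (c : ℝ≥0∞) :
    T ⁻¹' {x | c < φ x} =ᵐ[μ] {x | c < φ x} := by
  set ν := μ.withDensity φ
  have : IsFiniteMeasure ν := isFiniteMeasure_withDensity hφ_fin
  set B := {x | c < φ x}
  have hB : MeasurableSet B := measurableSet_lt measurable_const hφ
  have hTB : MeasurableSet (T ⁻¹' B) := hT.measurable hB
  have hμ : μ (B \ T ⁻¹' B) = μ (T ⁻¹' B \ B) :=
    measure_sdiff_symm hB.nullMeasurableSet hTB.nullMeasurableSet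
      (hT.measure_preimage hB.nullMeasurableSet).symm (measure_ne_top _ _)
  have hν : ν (B \ T ⁻¹' B) = ν (T ⁻¹' B \ B) :=
    measure_sdiff_symm hB.nullMeasurableSet hTB.nullMeasurableSet
      (hinv.measure_preimage hB.nullMeasurableSet).symm (measure_ne_top _ _)
  have hle : ν (T ⁻¹' B \ B) ≤ c * μ (T ⁻¹' B \ B) := by
    rw [withDensity_apply _ (hTB.diff hB), ← setLIntegral_const]
    exact setLIntegral_mono measurable_const fun x hx => not_lt.1 hx.2
  -- `φ > c` on `B \ T⁻¹' B` and `φ ≤ c` on `T⁻¹' B \ B`, two sets of equal `μ`- and `ν`-mass.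
  have hP : μ (B \ T ⁻¹' B) = 0 := by
    by_contra hP
    have hle' : ∫⁻ _ in B \ T ⁻¹' B, c ∂μ ≤ ν (B \ T ⁻¹' B) := by
      rw [withDensity_apply _ (hB.diff hTB)]
      exact setLIntegral_mono hφ fun x hx => hx.1.le
    have hlt : c * μ (B \ T ⁻¹' B) < ν (B \ T ⁻¹' B) := by
      rw [withDensity_apply _ (hB.diff hTB), ← setLIntegral_const]
      refine setLIntegral_strict_mono (hB.diff hTB) hP hφ ?_ (ae_of_all _ fun x hx => hx.1)
      exact ne_top_of_le_ne_top (measure_ne_top ν _) hle'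
    exact (hlt.trans_le (hν ▸ hμ ▸ hle)).false
  exact ae_eq_set.2 ⟨hμ ▸ hP, hP⟩

theorem Ergodic.exists_ae_eq_const_of_measurePreserving_withDensity (hT : Ergodic T μ)
    (hφ : Measurable φ) (hφ_fin : ∫⁻ x, φ x ∂μ ≠ ∞)
    (hinv : MeasurePreserving T (μ.withDensity φ) (μ.withDensity φ)) :
    ∃ c, φ =ᵐ[μ] Function.const α c := by
  have := HasCountableSeparatingOn.range_Ioi (X := ℝ≥0∞) (s := univ)
  refine exists_eventuallyEq_const_of_forall_separating (· ∈ range Ioi) ?_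
  rintro _ ⟨c, rfl⟩
  exact hT.quasiErgodic.ae_mem_or_ae_notMem₀
    (measurableSet_lt measurable_const hφ).nullMeasurableSet
    (hT.toMeasurePreserving.preimage_setOf_lt_ae_eq_of_withDensity hφ hφ_fin hinv c)

end

theorem UpperSemicontinuous.le_of_ae_eq_const {X β : Type*} [TopologicalSpace X]
    [MeasurableSpace X] {μ : Measure X} [μ.IsOpenPosMeasure] [LinearOrder β] {f : X → β}
    (hf : UpperSemicontinuous f) {c : β} (hc : f =ᵐ[μ] Function.const X c) (x : X) : c ≤ f x := by
  by_contra! hlt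
  refine (Measure.measure_pos_of_mem_nhds μ (hf x c hlt)).ne'
    (measure_mono_null (fun y hy => ?_) (ae_iff.1 hc))
  exact (show f y < c from hy).ne

namespace UnitAddCircle

theorem coe_eq_coe_iff_exists_int {x y : ℝ} : (x : UnitAddCircle) = y ↔ ∃ z : ℤ, y = x + z := by
  rw [eq_comm, ← sub_eq_zero, ← AddCircle.coe_sub, AddCircle.coe_eq_zero_iff]
  simp only [zsmul_eq_mul, mul_one, eq_sub_iff_add_eq, eq_comm (b := y), add_comm]

theorem coe_add_intCast (x : ℝ) (z : ℤ) : ((x + z : ℝ) : UnitAddCircle) = x :=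
  (coe_eq_coe_iff_exists_int.2 ⟨z, rfl⟩).symm

theorem volume_image_coe_eq_zero {N : Set ℝ} (hN : MeasurableSet N) (h0 : volume N = 0) :
    volume (((↑) : ℝ → UnitAddCircle) '' N) = 0 := by
  have hpre := QuotientAddGroup.preimage_image_mk (AddSubgroup.zmultiples (1 : ℝ)) N
  have hmeas : MeasurableSet (((↑) : ℝ → UnitAddCircle) '' N) :=
    measurableSet_quotient.2 <| hpre ▸ .iUnion fun _ => hN.preimage (measurable_add_const _)
  rw [AddCircle.add_projection_respects_measure 1 0 hmeas]
  refine measure_mono_null inter_subset_left ?_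
  rw [hpre]
  exact measure_iUnion_null fun z => (measure_preimage_add_right _ _ _).trans h0

theorem coe_toCircle_coe (x : ℝ) :
    (AddCircle.toCircle (x : UnitAddCircle) : ℂ) = Complex.exp (2 * Real.pi * Complex.I * x) := by
  rw [AddCircle.toCircle_apply_mk, Circle.coe_exp]
  push_cast
  ring_nf

theorem measurableEmbedding_coe_toCircle :
    MeasurableEmbedding fun x : UnitAddCircle => (AddCircle.toCircle x : ℂ) :=
  ((continuous_subtype_val.comp AddCircle.continuous_toCircle).isClosedEmbedding
    (Subtype.val_injective.comp (AddCircle.injective_toCircle one_ne_zero))).measurableEmbedding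

theorem exists_coe_toCircle_eq {p : ℂ} (hp : ‖p‖ = 1) :
    ∃ x : UnitAddCircle, (AddCircle.toCircle x : ℂ) = p := by
  obtain ⟨x, hx⟩ := (AddCircle.homeomorphCircle (T := 1) one_ne_zero).surjective
    ⟨p, mem_sphere_zero_iff_norm.2 hp⟩
  exact ⟨x, by rw [← AddCircle.homeomorphCircle_apply one_ne_zero, hx]⟩

end UnitAddCircle

theorem lintegral_eq_setLIntegral_Ioc_tsum_add_intCast {f : ℝ → ℝ≥0∞} (hf : Measurable f) :
    ∫⁻ x, f x = ∫⁻ t in Ioc 0 1, ∑' z : ℤ, f (t + z) := by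
  rw [lintegral_tsum (f := fun (z : ℤ) t => f (t + z))
      fun z => (hf.comp (measurable_add_const _)).aemeasurable,
    ← setLIntegral_univ, ← iUnion_Ioc_intCast, lintegral_iUnion (fun _ => measurableSet_Ioc)
      (pairwise_disjoint_Ioc_intCast ℝ)]
  refine tsum_congr fun z => ?_
  rw [← (measurePreserving_add_right volume (z : ℝ)).setLIntegral_comp_preimage_emb
    (measurableEmbedding_addRight _), preimage_add_const_Ioc]
  simp

noncomputable def fiberCard (K : Set ℝ) (x : UnitAddCircle) : ℕ∞ :=
  (K ∩ (↑) ⁻¹' {x}).encard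

theorem fiberCard_coe (K : Set ℝ) (t : ℝ) : fiberCard K t = {z : ℤ | t + z ∈ K}.encard := by
  have hinj : Function.Injective fun z : ℤ => t + z := fun a b h => by simpa using h
  rw [← hinj.encard_image, fiberCard]
  congr 1
  ext y
  simp only [mem_inter_iff, mem_preimage, mem_singleton_iff, mem_image, mem_ofPred_eq]
  rw [eq_comm, UnitAddCircle.coe_eq_coe_iff_exists_int]
  constructor
  · rintro ⟨hy, z, rfl⟩
    exact ⟨z, hy, rfl⟩
  · rintro ⟨z, hz, rfl⟩
    exact ⟨hz, z, rfl⟩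

theorem fiberCard_coe_eq_tsum (K : Set ℝ) (t : ℝ) :
    (fiberCard K t : ℝ≥0∞) = ∑' z : ℤ, K.indicator 1 (t + z) := by
  rw [fiberCard_coe, ← ENNReal.tsum_set_one, tsum_subtype _ fun _ => (1 : ℝ≥0∞)]
  rfl

theorem measurable_fiberCard {K : Set ℝ} (hK : MeasurableSet K) :
    Measurable fun x => (fiberCard K x : ℝ≥0∞) := by
  refine QuotientAddGroup.measurable_from_quotient.2 ?_
  simp only [Function.comp_def, fiberCard_coe_eq_tsum]
  exact Measurable.tsum fun z => (measurable_one.indicator hK).comp (measurable_add_const _)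

theorem map_coe_restrict_eq_withDensity_fiberCard {K : Set ℝ} (hK : MeasurableSet K) :
    (volume.restrict K).map ((↑) : ℝ → UnitAddCircle) =
      volume.withDensity fun x => (fiberCard K x : ℝ≥0∞) := by
  ext A hA
  have hA' : MeasurableSet (((↑) : ℝ → UnitAddCircle) ⁻¹' A) := AddCircle.measurable_mk' hA
  rw [Measure.map_apply AddCircle.measurable_mk' hA, Measure.restrict_apply hA',
    withDensity_apply _ hA, ← lintegral_indicator hA, ← UnitAddCircle.lintegral_preimage 0,
    zero_add, ← lintegral_indicator_one (hA'.inter hK),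
    lintegral_eq_setLIntegral_Ioc_tsum_add_intCast (measurable_one.indicator (hA'.inter hK))]
  refine setLIntegral_congr_fun measurableSet_Ioc fun t _ => ?_
  by_cases ht : (t : UnitAddCircle) ∈ A
  · rw [indicator_of_mem ht, fiberCard_coe_eq_tsum]
    refine tsum_congr fun z => ?_
    have htz : t + (z : ℝ) ∈ (↑) ⁻¹' A := by
      rwa [mem_preimage, UnitAddCircle.coe_add_intCast]
    rw [inter_indicator_one, Pi.mul_apply, indicator_of_mem htz, Pi.one_apply, one_mul]
  · simp [ht]

theorem eventually_setOf_add_intCast_mem_subset {K : Set ℝ} (hK : IsCompact K) (t : ℝ) :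
    ∀ᶠ s in 𝓝 t, {z : ℤ | s + (z : ℝ) ∈ K} ⊆ {z : ℤ | t + (z : ℝ) ∈ K} := by
  set Z := {z : ℤ | (z : ℝ) ∈ K + closedBall (-t) 1 ∧ t + (z : ℝ) ∉ K}
  have hZ : Z.Finite := by
    refine (Filter.eventually_cofinite.1 (Int.tendsto_coe_cofinite.eventually
      (hK.add (isCompact_closedBall (-t) 1)).compl_mem_cocompact)).subset fun z hz => ?_
    exact not_not.2 hz.1
  have hW : IsClosed (⋃ z ∈ Z, (· + (z : ℝ)) ⁻¹' K) :=
    hZ.isClosed_biUnion fun z _ => hK.isClosed.preimage (continuous_add_const _)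
  have htW : t ∉ ⋃ z ∈ Z, (· + (z : ℝ)) ⁻¹' K := by
    simp only [mem_iUnion, mem_preimage, not_exists]
    exact fun z hz => hz.2
  filter_upwards [closedBall_mem_nhds t one_pos, hW.isOpen_compl.mem_nhds htW]
    with s hs hsW z hz
  by_contra htz
  have hs' : -s ∈ closedBall (-t) 1 := by rwa [mem_closedBall, dist_neg_neg]
  exact hsW (mem_iUnion₂.2 ⟨z, ⟨⟨s + z, hz, -s, hs', by ring⟩, htz⟩, hz⟩)

theorem upperSemicontinuous_fiberCard {K : Set ℝ} (hK : IsCompact K) :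
    UpperSemicontinuous (fiberCard K) := by
  intro x b hb
  induction x using QuotientAddGroup.induction_on with | H t => ?_
  rw [QuotientAddGroup.nhds_eq, eventually_map]
  filter_upwards [eventually_setOf_add_intCast_mem_subset hK t] with s hs
  rw [fiberCard_coe] at hb ⊢
  exact (encard_le_encard hs).trans_lt hb

section

variable {d : ℕ} (n : Fin d → ℤ)

noncomputable def ifsMap (i : Fin d) (x : ℝ) : ℝ := (x + n i) / d

noncomputable def codingSeries (ω : ℕ → Fin d) : ℝ :=
  ∑' k : ℕ, (n (ω k) : ℝ) / (d : ℝ) ^ (k + 1)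

def ifsOverlap (K : Set ℝ) : Set ℝ :=
  ⋃ (i : Fin d) (j : Fin d) (_ : i ≠ j), ifsMap n i '' K ∩ ifsMap n j '' K

theorem lipschitzWith_ifsMap (i : Fin d) : LipschitzWith (d : ℝ≥0)⁻¹ (ifsMap n i) := by
  refine LipschitzWith.of_dist_le_mul fun x y => ?_
  rw [ifsMap, ifsMap, Real.dist_eq, Real.dist_eq, ← sub_div, add_sub_add_right_eq_sub, abs_div,
    Nat.abs_cast, NNReal.coe_inv, NNReal.coe_natCast, div_eq_inv_mul]

theorem ifsMap_injective (hd : d ≠ 0) (i : Fin d) : Function.Injective (ifsMap n i) := by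
  intro x y h
  simpa [ifsMap, hd] using h

theorem image_ifsMap_eq_preimage (hd : d ≠ 0) (i : Fin d) (s : Set ℝ) :
    ifsMap n i '' s = ((d : ℝ) * ·) ⁻¹' ((· + -(n i : ℝ)) ⁻¹' s) := by
  refine congrFun (image_eq_preimage_of_inverse (g := fun y => (d : ℝ) * y + -(n i : ℝ))
    (fun x => ?_) fun y => ?_) s <;> simp only [ifsMap] <;> field_simp <;> ring

theorem volume_image_ifsMap (hd : d ≠ 0) (i : Fin d) (s : Set ℝ) :
    volume (ifsMap n i '' s) = (d : ℝ≥0∞)⁻¹ * volume s := by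
  rw [image_ifsMap_eq_preimage n hd, Real.volume_preimage_mul_left (by positivity),
    measure_preimage_add_right, abs_inv, Nat.abs_cast, ENNReal.ofReal_inv_of_pos (by positivity),
    ENNReal.ofReal_natCast]

theorem sum_volume_image_ifsMap (hd : d ≠ 0) (s : Set ℝ) :
    ∑ i, volume (ifsMap n i '' s) = volume s := by
  simp_rw [volume_image_ifsMap n hd, Finset.sum_const, Finset.card_univ, Fintype.card_fin,
    nsmul_eq_mul, ← mul_assoc]
  rw [ENNReal.mul_inv_cancel (by exact_mod_cast hd) (ENNReal.natCast_ne_top d), one_mul]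

theorem nsmul_coe_ifsMap (hd : d ≠ 0) (i : Fin d) (y : ℝ) :
    d • (ifsMap n i y : UnitAddCircle) = y := by
  rw [← AddCircle.coe_nsmul, nsmul_eq_mul, ifsMap, mul_div_cancel₀ _ (by exact_mod_cast hd),
    UnitAddCircle.coe_add_intCast]

theorem norm_codingSeries_term_le (ω : ℕ → Fin d) (k : ℕ) :
    ‖(n (ω k) : ℝ) / (d : ℝ) ^ (k + 1)‖ ≤ (∑ i, |(n i : ℝ)|) * (d : ℝ)⁻¹ ^ (k + 1) := by
  rw [norm_div, norm_pow, Real.norm_natCast, inv_pow, ← div_eq_mul_inv]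
  gcongr
  exact Finset.single_le_sum (f := fun i => |(n i : ℝ)|) (fun i _ => abs_nonneg _)
    (Finset.mem_univ _)

theorem summable_codingSeries_bound (hd : 1 < d) :
    Summable fun k : ℕ => (∑ i, |(n i : ℝ)|) * (d : ℝ)⁻¹ ^ (k + 1) := by
  refine ((summable_geometric_of_lt_one (by positivity) ?_).comp_injective
    (add_left_injective 1)).mul_left _
  exact inv_lt_one_of_one_lt₀ (by exact_mod_cast hd)

theorem continuous_codingSeries (hd : 1 < d) : Continuous (codingSeries n) :=
  continuous_tsum (fun k => (continuous_of_discreteTopology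
    (f := fun i : Fin d => (n i : ℝ) / (d : ℝ) ^ (k + 1))).comp (continuous_apply k))
    (summable_codingSeries_bound n hd) fun k ω => norm_codingSeries_term_le n ω k

theorem codingSeries_eq_ifsMap (hd : 1 < d) (ω : ℕ → Fin d) :
    codingSeries n ω = ifsMap n (ω 0) (codingSeries n fun k => ω (k + 1)) := by
  have hs := (summable_codingSeries_bound n hd).of_norm_bounded (norm_codingSeries_term_le n ω)
  unfold codingSeries ifsMap
  rw [hs.tsum_eq_zero_add, add_div, ← tsum_div_const, add_comm, zero_add, pow_one]
  congr 1
  refine tsum_congr fun k => ?_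
  rw [div_div, ← pow_succ]

variable {n}

theorem mapsTo_ifsMap {K : Set ℝ} (hK : K = ⋃ i, ifsMap n i '' K) (i : Fin d) :
    MapsTo (ifsMap n i) K K := fun x hx => by
  rw [hK]
  exact mem_iUnion_of_mem i (mem_image_of_mem _ hx)

theorem range_codingSeries {K : Set ℝ} (hd : 1 < d) (hne : K.Nonempty) (hc : IsCompact K)
    (hK : K = ⋃ i, ifsMap n i '' K) : range (codingSeries n) = K := by
  have hlt : (d : ℝ≥0)⁻¹ < 1 := inv_lt_one_of_one_lt₀ (by exact_mod_cast hd)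
  have hrange := isCompact_range (continuous_codingSeries n hd)
  have : Nonempty (Fin d) := ⟨⟨0, by omega⟩⟩
  refine Subset.antisymm ?_ ?_
  · refine subset_of_forall_mem_image_of_mapsTo hlt (lipschitzWith_ifsMap n) hrange.isBounded
      hc.isClosed hne (forall_mem_range.2 fun ω => ?_) (mapsTo_ifsMap hK)
    exact ⟨ω 0, _, mem_range_self _, (codingSeries_eq_ifsMap n hd ω).symm⟩
  · refine subset_of_forall_mem_image_of_mapsTo hlt (lipschitzWith_ifsMap n) hc.isBounded
      hrange.isClosed (range_nonempty _) (fun y hy => ?_) fun i => ?_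
    · rw [hK] at hy
      obtain ⟨i, y', hy', rfl⟩ := mem_iUnion.1 hy
      exact ⟨i, y', hy', rfl⟩
    · rintro _ ⟨ω, rfl⟩
      exact ⟨Stream'.cons i ω, codingSeries_eq_ifsMap n hd _⟩

theorem volume_ifsOverlap {K : Set ℝ} (hd : d ≠ 0) (hc : IsCompact K)
    (hK : K = ⋃ i, ifsMap n i '' K) : volume (ifsOverlap n K) = 0 := by
  have hdisj : Pairwise (Function.onFun (AEDisjoint volume) fun i => ifsMap n i '' K) := by
    refine pairwise_aedisjoint_of_sum_le_measure_iUnion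
      (fun i => (hc.image (lipschitzWith_ifsMap n i).continuous).isClosed.measurableSet) ?_
      (hK ▸ hc.measure_lt_top.ne)
    rw [← hK, sum_volume_image_ifsMap n hd]
  exact measure_iUnion_null fun i => measure_iUnion_null fun j =>
    measure_iUnion_null fun hij => hdisj hij

theorem coe_codingSeries_tail (hd : 1 < d) (ω : ℕ → Fin d) :
    (codingSeries n (fun k => ω (k + 1)) : UnitAddCircle) =
      d • (codingSeries n ω : UnitAddCircle) := by
  rw [codingSeries_eq_ifsMap n hd ω, nsmul_coe_ifsMap n (by omega)]

theorem codingSeries_mem_ifsOverlap (hd : 1 < d) {ω ω' : ℕ → Fin d}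
    (hF : codingSeries n ω = codingSeries n ω') (h0 : ω 0 ≠ ω' 0) :
    codingSeries n ω ∈ ifsOverlap n (range (codingSeries n)) := by
  simp only [ifsOverlap, mem_iUnion]
  refine ⟨ω 0, ω' 0, h0, ⟨_, mem_range_self _, (codingSeries_eq_ifsMap n hd ω).symm⟩, ?_⟩
  rw [hF]
  exact ⟨_, mem_range_self _, (codingSeries_eq_ifsMap n hd ω').symm⟩

/-- Two distinct codings of the same point first differ at some index `k`; there the shifted
codings give one point of an overlap, which is `dᵏ` times the original point modulo `1`. -/
theorem exists_iterate_mem_image_ifsOverlap (hd : 1 < d) {ω ω' : ℕ → Fin d}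
    (hF : codingSeries n ω = codingSeries n ω') (hne : ω ≠ ω') :
    ∃ k, (d • · : UnitAddCircle → UnitAddCircle)^[k] (codingSeries n ω) ∈
      ((↑) : ℝ → UnitAddCircle) '' ifsOverlap n (range (codingSeries n)) := by
  obtain ⟨j, hj⟩ := Function.ne_iff.1 hne
  clear hne
  induction j generalizing ω ω' with
  | zero => exact ⟨0, _, codingSeries_mem_ifsOverlap hd hF hj, rfl⟩
  | succ j ih =>
    by_cases h0 : ω 0 = ω' 0
    · have htail :
          codingSeries n (fun k => ω (k + 1)) = codingSeries n (fun k => ω' (k + 1)) := by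
        rw [codingSeries_eq_ifsMap n hd, codingSeries_eq_ifsMap n hd ω', h0] at hF
        exact ifsMap_injective n (by omega) _ hF
      obtain ⟨k, hk⟩ := ih htail hj
      refine ⟨k + 1, ?_⟩
      rwa [Function.iterate_succ_apply, ← coe_codingSeries_tail hd]
    · exact ⟨0, _, codingSeries_mem_ifsOverlap hd hF h0, rfl⟩

theorem image_codingSeries_setOf_coe_eq {K : Set ℝ} (hrange : range (codingSeries n) = K)
    (x : UnitAddCircle) :
    codingSeries n '' {ω | (codingSeries n ω : UnitAddCircle) = x} = K ∩ (↑) ⁻¹' {x} := by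
  ext y
  constructor
  · rintro ⟨ω, hω, rfl⟩
    exact ⟨hrange ▸ mem_range_self ω, hω⟩
  · rintro ⟨hy, hyx⟩
    obtain ⟨ω, rfl⟩ := hrange.symm ▸ hy
    exact ⟨ω, hyx, rfl⟩

theorem fiberCard_le_encard_setOf_coe_codingSeries {K : Set ℝ}
    (hrange : range (codingSeries n) = K) (x : UnitAddCircle) :
    fiberCard K x ≤ {ω | (codingSeries n ω : UnitAddCircle) = x}.encard := by
  rw [fiberCard, ← image_codingSeries_setOf_coe_eq hrange]
  exact encard_image_le _ _

theorem encard_setOf_coe_codingSeries_eq_fiberCard {K : Set ℝ} (hd : 1 < d)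
    (hrange : range (codingSeries n) = K) {x : UnitAddCircle}
    (hx : ∀ k, (d • · : UnitAddCircle → UnitAddCircle)^[k] x ∉ (↑) '' ifsOverlap n K) :
    {ω | (codingSeries n ω : UnitAddCircle) = x}.encard = fiberCard K x := by
  rw [fiberCard, ← image_codingSeries_setOf_coe_eq hrange, InjOn.encard_image]
  intro ω hω ω' _ hF
  by_contra hne
  obtain ⟨k, hk⟩ := exists_iterate_mem_image_ifsOverlap hd hF hne
  rw [hrange, show (codingSeries n ω : UnitAddCircle) = x from hω] at hk
  exact hx k hk

theorem ae_forall_iterate_notMem_image_ifsOverlap {K : Set ℝ} (hd : 1 < d) (hc : IsCompact K)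
    (hK : K = ⋃ i, ifsMap n i '' K) :
    ∀ᵐ x : UnitAddCircle, ∀ k, (d • · : UnitAddCircle → UnitAddCircle)^[k] x ∉
      (↑) '' ifsOverlap n K := by
  have hmeas : MeasurableSet (ifsOverlap n K) := by
    refine .iUnion fun i => .iUnion fun j => .iUnion fun _ => .inter ?_ ?_ <;>
      exact (hc.image (lipschitzWith_ifsMap n _).continuous).isClosed.measurableSet
  have hnull := UnitAddCircle.volume_image_coe_eq_zero hmeas (volume_ifsOverlap (by omega) hc hK)
  refine ae_all_iff.2 fun k => ?_
  have hT := ((AddCircle.ergodic_nsmul (T := 1) hd).toMeasurePreserving.iterate k)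
  have hpre := hT.quasiMeasurePreserving.preimage_null hnull
  exact measure_eq_zero_iff_ae_notMem.1 hpre

theorem map_coe_restrict_preimage_nsmul_le {K : Set ℝ} (hd : d ≠ 0)
    (hK : K = ⋃ i, ifsMap n i '' K) {A : Set UnitAddCircle} (hA : MeasurableSet A) :
    (volume.restrict K).map ((↑) : ℝ → UnitAddCircle) ((d • ·) ⁻¹' A) ≤
      (volume.restrict K).map ((↑) : ℝ → UnitAddCircle) A := by
  have hTA : MeasurableSet ((d • · : UnitAddCircle → UnitAddCircle) ⁻¹' A) :=
    (continuous_nsmul d).measurable hA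
  rw [Measure.map_apply AddCircle.measurable_mk' hTA, Measure.map_apply AddCircle.measurable_mk' hA,
    Measure.restrict_apply (AddCircle.measurable_mk' hTA),
    Measure.restrict_apply (AddCircle.measurable_mk' hA)]
  have hsub : (↑) ⁻¹' ((d • ·) ⁻¹' A) ∩ K ⊆ ⋃ i, ifsMap n i '' ((↑) ⁻¹' A ∩ K) := by
    rintro _ ⟨hyA, hyK⟩
    rw [hK] at hyK
    obtain ⟨i, y, hy, rfl⟩ := mem_iUnion.1 hyK
    refine mem_iUnion.2 ⟨i, y, ⟨?_, hy⟩, rfl⟩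
    rwa [mem_preimage, mem_preimage, nsmul_coe_ifsMap n hd] at hyA
  calc volume ((↑) ⁻¹' ((d • ·) ⁻¹' A) ∩ K)
      ≤ ∑ i, volume (ifsMap n i '' ((↑) ⁻¹' A ∩ K)) :=
        (measure_mono hsub).trans (measure_iUnion_fintype_le _ _)
    _ = volume ((↑) ⁻¹' A ∩ K) := sum_volume_image_ifsMap n hd _

theorem measurePreserving_nsmul_map_coe_restrict {K : Set ℝ} (hd : d ≠ 0) (hc : IsCompact K)
    (hK : K = ⋃ i, ifsMap n i '' K) :
    MeasurePreserving (d • · : UnitAddCircle → UnitAddCircle)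
      ((volume.restrict K).map (↑)) ((volume.restrict K).map (↑)) := by
  have : IsFiniteMeasure (volume.restrict K) := isFiniteMeasure_restrict.2 hc.measure_lt_top.ne
  have hT : Measurable (d • · : UnitAddCircle → UnitAddCircle) := (continuous_nsmul d).measurable
  refine ⟨hT, Measure.eq_of_le_of_measure_univ_eq ?_ ?_⟩
  · refine Measure.le_iff.2 fun A hA => ?_
    rw [Measure.map_apply hT hA]
    exact map_coe_restrict_preimage_nsmul_le hd hK hA
  · rw [Measure.map_apply hT .univ, preimage_univ]

theorem exists_volume_eq_and_ae_fiberCard_eq {K : Set ℝ} (hd : 1 < d) (hc : IsCompact K)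
    (hK : K = ⋃ i, ifsMap n i '' K) :
    ∃ m : ℕ, volume K = m ∧ ∀ᵐ x, fiberCard K x = m := by
  have hmeas := hc.isClosed.measurableSet
  have hdens := map_coe_restrict_eq_withDensity_fiberCard hmeas
  have hvol : volume K = ∫⁻ x, (fiberCard K x : ℝ≥0∞) := by
    rw [← setLIntegral_univ, ← withDensity_apply _ .univ, ← hdens,
      Measure.map_apply AddCircle.measurable_mk' .univ, preimage_univ, Measure.restrict_apply_univ]
  have hinv := measurePreserving_nsmul_map_coe_restrict (n := n) (by omega) hc hK
  rw [hdens] at hinv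
  obtain ⟨c, hφ⟩ :=
    (AddCircle.ergodic_nsmul hd).exists_ae_eq_const_of_measurePreserving_withDensity
      (measurable_fiberCard hmeas) (hvol ▸ hc.measure_lt_top.ne) hinv
  have hKc : volume K = c := by
    rw [hvol, lintegral_congr_ae hφ]
    simp
  obtain ⟨x, hx : (fiberCard K x : ℝ≥0∞) = c⟩ := hφ.exists
  obtain ⟨m, hm⟩ : ∃ m : ℕ, (m : ℕ∞) = fiberCard K x := ENat.ne_top_iff_exists.1 fun htop =>
    hc.measure_lt_top.ne (by rw [hKc, ← hx, htop, ENat.toENNReal_top])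
  have hcm : c = m := by rw [← hx, ← hm, ENat.toENNReal_coe]
  refine ⟨m, hKc.trans hcm, hφ.mono fun y (hy : (fiberCard K y : ℝ≥0∞) = c) => ?_⟩
  rw [← ENat.toENNReal_inj, hy, hcm, ENat.toENNReal_coe]

theorem circleMeasure_eq_map_toCircle :
    circleMeasure = volume.map fun x : UnitAddCircle => (AddCircle.toCircle x : ℂ) := by
  rw [circleMeasure, ← (AddCircle.measurePreserving_mk 1 0).map_eq,
    Measure.map_map UnitAddCircle.measurableEmbedding_coe_toCircle.measurable
      AddCircle.measurable_mk', zero_add, Measure.restrict_congr_set Ico_ae_eq_Ioc]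
  congr 1
  funext x
  exact (UnitAddCircle.coe_toCircle_coe x).symm

theorem codingMap_eq_toCircle (ω : ℕ → Fin d) :
    codingMap d n ω = AddCircle.toCircle (codingSeries n ω : UnitAddCircle) :=
  (UnitAddCircle.coe_toCircle_coe _).symm

theorem setOf_codingMap_eq_toCircle (x : UnitAddCircle) :
    {ω | codingMap d n ω = AddCircle.toCircle x} =
      {ω | (codingSeries n ω : UnitAddCircle) = x} := by
  ext ω
  rw [mem_ofPred_eq, mem_ofPred_eq, codingMap_eq_toCircle,
    UnitAddCircle.measurableEmbedding_coe_toCircle.injective.eq_iff]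

end

/-- **Multiplicity Theorem** for `f(z) = z^d`: there is a natural number `m`
(the multiplicity) such that `Leb(K) = m`, almost every fiber of the coding map
has exactly `m` elements, and every fiber over the circle has at least `m`
elements. -/
theorem multiplicity_theorem_pow_d (d : ℕ) (hd : 2 ≤ d) (n : Fin d → ℤ)
    (K : Set ℝ) (hne : K.Nonempty) (hc : IsCompact K)
    (hK : K = ⋃ i : Fin d, (fun x : ℝ => (x + (n i : ℝ)) / (d : ℝ)) '' K) :
    ∃ m : ℕ,
      volume K = (m : ENNReal) ∧
      (∀ᵐ p ∂circleMeasure,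
        Set.encard {ω : ℕ → Fin d | codingMap d n ω = p} = (m : ℕ∞)) ∧
      (∀ p : ℂ, ‖p‖ = 1 →
        (m : ℕ∞) ≤ Set.encard {ω : ℕ → Fin d | codingMap d n ω = p}) := by
  have hK' : K = ⋃ i, ifsMap n i '' K := hK
  have hrange := range_codingSeries hd hne hc hK'
  obtain ⟨m, hvol, hae⟩ := exists_volume_eq_and_ae_fiberCard_eq hd hc hK'
  refine ⟨m, hvol, ?_, fun p hp => ?_⟩
  · rw [circleMeasure_eq_map_toCircle, UnitAddCircle.measurableEmbedding_coe_toCircle.ae_map_iff]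
    filter_upwards [hae, ae_forall_iterate_notMem_image_ifsOverlap hd hc hK'] with x hx hgood
    rw [setOf_codingMap_eq_toCircle,
      encard_setOf_coe_codingSeries_eq_fiberCard hd hrange hgood, hx]
  · obtain ⟨x, rfl⟩ := UnitAddCircle.exists_coe_toCircle_eq hp
    rw [setOf_codingMap_eq_toCircle]
    exact ((upperSemicontinuous_fiberCard hc).le_of_ae_eq_const hae x).trans
      (fiberCard_le_encard_setOf_coe_codingSeries hrange x)
end

section
/- If K has positive Lebesgue measure, then K has nonempty interior in ℝ. (Instance, for f(z) = z^d, of the paper's corollary that a surjective coding forces the Julia tile K to have nonempty interior in the relative topology of the lifted Julia set.) -/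
/-!
Project `K` to the circle `ℝ/ℤ`. The relation `K = ⋃ gᵢ(K)` makes the image `A` forward-invariant
under the map `y ↦ d • y`, which is ergodic, so the closed set `A` is null or the
whole circle. It cannot be null, since `K` would then lie in the null preimage of `A`. Hence the
integer translates of `K` cover `ℝ`, and by Baire one of them, hence `K` itself, has interior.
-/

open MeasureTheory Set

theorem QuotientAddGroup.nonempty_interior_of_image_mk_eq_univ {G : Type*} [AddGroup G]
    [TopologicalSpace G] [IsTopologicalAddGroup G] [BaireSpace G] {N : AddSubgroup G}
    [Countable N] {K : Set G} (hK : IsClosed K) (h : ((↑) '' K : Set (G ⧸ N)) = univ) :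
    (interior K).Nonempty := by
  have hcover : ⋃ x : N, (· + (x : G)) ⁻¹' K = univ := by
    rw [← preimage_image_mk, h, preimage_univ]
  obtain ⟨x, y, hy⟩ := nonempty_interior_of_iUnion_of_closed
    (fun x : N ↦ hK.preimage (continuous_add_const (x : G))) hcover
  have htranslate : (· + (x : G)) ⁻¹' interior K = interior ((· + (x : G)) ⁻¹' K) :=
    (Homeomorph.addRight (x : G)).preimage_interior K
  rw [← htranslate] at hy
  exact ⟨_, hy⟩

namespace AddCircle

variable {T : ℝ} [Fact (0 < T)]

theorem volume_preimage_coe_eq_zero {A : Set (AddCircle T)} (hA : MeasurableSet A)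
    (h : volume A = 0) : volume (((↑) : ℝ → AddCircle T) ⁻¹' A) = 0 := by
  have hT : 0 < T := Fact.out
  have hcover : ((↑) : ℝ → AddCircle T) ⁻¹' A
      = ⋃ m : ℤ, (↑) ⁻¹' A ∩ Ioc (m • T) (m • T + T) := by
    rw [← inter_iUnion, eq_comm, inter_eq_left]
    intro x _
    simpa [add_mul] using (iUnion_Ioc_add_zsmul hT 0).ge (mem_univ x)
  rw [hcover]
  refine measure_iUnion_null fun m ↦ ?_
  rw [← add_projection_respects_measure T (m • T) hA, h]

theorem nsmul_image_coe_subset {ι : Type*} {d : ℕ} (hd : d ≠ 0) (n : ι → ℤ) {K : Set ℝ}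
    (hK : K ⊆ ⋃ i, (fun x : ℝ ↦ (x + n i) / d) '' K) :
    (d • ·) '' ((↑) '' K : Set (AddCircle (1 : ℝ))) ⊆ (↑) '' K := by
  rintro _ ⟨_, ⟨x, hx, rfl⟩, rfl⟩
  obtain ⟨i, y, hy, rfl⟩ := mem_iUnion.mp (hK hx)
  refine ⟨y, hy, ?_⟩
  have hn : (n i : ℝ) ∈ AddSubgroup.zmultiples (1 : ℝ) := ⟨n i, by simp⟩
  have hdy : d • ((y + n i) / d) = y + n i := by
    rw [nsmul_eq_mul]
    field_simp
  dsimp only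
  rw [← coe_nsmul, hdy, QuotientAddGroup.mk_add_of_mem y hn]

end AddCircle

theorem nonempty_interior_of_pos_measure_pow_d_general (d : ℕ) (hd : 2 ≤ d)
    (n : Fin d → ℤ) (K : Set ℝ) (hc : IsCompact K)
    (hK : K = ⋃ i : Fin d, (fun x : ℝ => (x + (n i : ℝ)) / (d : ℝ)) '' K)
    (hpos : 0 < volume K) :
    (interior K).Nonempty := by
  set A : Set (AddCircle (1 : ℝ)) := (↑) '' K
  have hA : IsClosed A := (hc.image (AddCircle.continuous_mk' 1)).isClosed
  have hinv : (d • ·) '' A ⊆ A := AddCircle.nsmul_image_coe_subset (by omega) n hK.le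
  rcases (AddCircle.ergodic_nsmul hd).ae_empty_or_univ_of_image_ae_le
    hA.measurableSet.nullMeasurableSet hinv.eventuallyLE with hnull | hfull
  · have hA0 : volume A = 0 := by rw [measure_congr hnull, measure_empty]
    exact absurd (measure_mono_null (subset_preimage_image _ K)
      (AddCircle.volume_preimage_coe_eq_zero hA.measurableSet hA0)) hpos.ne'
  · exact QuotientAddGroup.nonempty_interior_of_image_mk_eq_univ hc.isClosed
      (hA.ae_eq_univ_iff_eq.mp hfull)

/-- For `f(z) = z^d`: if the attractor `K` of the lifted iterated function
system `gᵢ(x) = (x + nᵢ)/d` has positive Lebesgue measure, then `K` has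
nonempty interior in `ℝ`. -/
theorem nonempty_interior_of_pos_measure_pow_d (d : ℕ) (hd : 2 ≤ d)
    (n : Fin d → ℤ) (K : Set ℝ) (hne : K.Nonempty) (hc : IsCompact K)
    (hK : K = ⋃ i : Fin d, (fun x : ℝ => (x + (n i : ℝ)) / (d : ℝ)) '' K)
    (hpos : 0 < volume K) :
    (interior K).Nonempty :=
  nonempty_interior_of_pos_measure_pow_d_general d hd n K hc hK hpos
end

section
/- Let n_1 < n_2 be integers and define π : {1,2}^ℕ → S¹ by π(ω) = exp(2πi Σ_{k=1}^∞ n_{ω_k} 2^{-k}). Then π is surjective onto S¹, and for Haar-almost every p ∈ S¹ the fiber π^{-1}(p) has exactly n_2 − n_1 elements; that is, π is almost (n_2 − n_1)-to-one. -/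
open MeasureTheory

/-! Writing `m = n₂ - n₁`, the digit `n_{ω_k}` is `n₁ + m ω_k`, so `π(ω) = exp(2πi m g(ω))`
where `g(ω) = ∑ ω_k 2^{-(k+1)}` is the number with binary digits `ω`. As `g` maps onto `[0,1]`,
`π` is onto the circle. Almost every `p` is `exp(2πit)` with `t ∈ (0,1)` irrational; its fiber
is the set of `ω` with `g(ω) = (t + j)/m` for some `0 ≤ j < m`. These `m` numbers are
irrational, and an irrational number has exactly one binary expansion. -/

open Set Complex

noncomputable def expTwoPiI (x : ℝ) : ℂ := exp (2 * Real.pi * I * x)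

lemma expTwoPiI_eq_expTwoPiI_iff {x y : ℝ} : expTwoPiI x = expTwoPiI y ↔ ∃ j : ℤ, x = y + j := by
  have h2πI : (2 * Real.pi * I : ℂ) ≠ 0 := by simp [Real.pi_ne_zero]
  simp only [expTwoPiI, exp_eq_exp_iff_exists_int]
  refine exists_congr fun j => ⟨fun h => ?_, fun h => by rw [h]; push_cast; ring⟩
  have : ((x : ℝ) : ℂ) = ((y + j : ℝ) : ℂ) := by
    refine mul_left_cancel₀ h2πI (h.trans ?_)
    push_cast; ring
  exact_mod_cast this

lemma expTwoPiI_add_intCast (x : ℝ) (j : ℤ) : expTwoPiI (x + j) = expTwoPiI x :=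
  expTwoPiI_eq_expTwoPiI_iff.2 ⟨j, rfl⟩

lemma expTwoPiI_fract (x : ℝ) : expTwoPiI (Int.fract x) = expTwoPiI x := by
  rw [← expTwoPiI_add_intCast _ ⌊x⌋, Int.fract_add_floor]

lemma continuous_expTwoPiI : Continuous expTwoPiI := by
  unfold expTwoPiI; fun_prop

lemma range_expTwoPiI : range expTwoPiI = Metric.sphere 0 1 := by
  ext p
  refine ⟨?_, fun hp => ⟨arg p / (2 * Real.pi), ?_⟩⟩
  · rintro ⟨x, rfl⟩
    rw [mem_sphere_zero_iff_norm, ← norm_exp_ofReal_mul_I (2 * Real.pi * x), expTwoPiI]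
    push_cast; ring_nf
  · rw [mem_sphere_zero_iff_norm] at hp
    conv_rhs => rw [← norm_mul_exp_arg_mul_I p, hp]
    simp only [expTwoPiI, ofReal_one, one_mul]
    congr 1
    push_cast
    field_simp

lemma circleMeasure_eq_map : circleMeasure = (volume.restrict (Ico 0 1)).map expTwoPiI := rfl

lemma ae_circleMeasure_exists_irrational :
    ∀ᵐ p ∂circleMeasure, ∃ t ∈ Ioo (0 : ℝ) 1, Irrational t ∧ expTwoPiI t = p := by
  have hrange : ∀ᵐ p ∂circleMeasure, p ∈ range expTwoPiI :=
    ae_map_mem_range _ (range_expTwoPiI ▸ Metric.isClosed_sphere.measurableSet) _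
  have hnotRat : ∀ᵐ p ∂circleMeasure, p ∉ expTwoPiI '' range ((↑) : ℚ → ℝ) := by
    rw [circleMeasure_eq_map, ae_map_iff continuous_expTwoPiI.measurable.aemeasurable
      ((countable_range _).image _).measurableSet.compl]
    filter_upwards [(countable_range ((↑) : ℚ → ℝ)).ae_notMem _] with x hx ⟨_, ⟨q, rfl⟩, hqx⟩
    obtain ⟨j, hj⟩ := expTwoPiI_eq_expTwoPiI_iff.1 hqx
    exact hx ⟨q - j, by push_cast; linarith⟩
  filter_upwards [hrange, hnotRat] with p hp hx
  obtain ⟨x, rfl⟩ := hp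
  have hirr : Irrational x := fun hq => hx (mem_image_of_mem _ hq)
  refine ⟨Int.fract x, ⟨?_, Int.fract_lt_one x⟩, hirr.sub_intCast ⌊x⌋, expTwoPiI_fract x⟩
  exact (Int.fract_nonneg x).lt_of_ne'
    (Int.fract_ne_zero_iff.2 fun ⟨m, hm⟩ => hirr.ne_int m hm.symm)

namespace Real

lemma not_irrational_sum_ofDigitsTerm {b : ℕ} (a : ℕ → Fin b) (n : ℕ) :
    ¬ Irrational (∑ i ∈ Finset.range n, ofDigitsTerm a i) := by
  rw [Irrational, not_not]
  exact ⟨∑ i ∈ Finset.range n, ((a i : ℕ) : ℚ) * ((b : ℚ) ^ (i + 1))⁻¹, by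
    push_cast [ofDigitsTerm]; rfl⟩

lemma ofDigits_eq_sum_of_ofDigits_eq {b : ℕ} {x y : ℕ → Fin b} {k : ℕ}
    (hxy : ∀ i < k, x i = y i) (hk : y k < x k) (h : ofDigits x = ofDigits y) :
    ofDigits x = ∑ i ∈ Finset.range (k + 1), ofDigitsTerm x i := by
  have hsum : ∑ i ∈ Finset.range (k + 1), ofDigitsTerm y i + ((b : ℝ) ^ (k + 1))⁻¹ ≤
      ∑ i ∈ Finset.range (k + 1), ofDigitsTerm x i := by
    have hpre : ∑ i ∈ Finset.range k, ofDigitsTerm x i = ∑ i ∈ Finset.range k, ofDigitsTerm y i :=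
      Finset.sum_congr rfl fun i hi => by simp only [ofDigitsTerm, hxy i (Finset.mem_range.1 hi)]
    rw [Finset.sum_range_succ, Finset.sum_range_succ, hpre, ofDigitsTerm, ofDigitsTerm]
    have : ((y k : ℕ) : ℝ) + 1 ≤ x k := by exact_mod_cast hk
    nlinarith [show (0 : ℝ) ≤ ((b : ℝ) ^ (k + 1))⁻¹ by positivity]
  -- The scaled tails lie in `[0, b^{-(k+1)}]`, so they can only make up that gap
  -- if the tail of `x` is `0`.
  have hx := ofDigits_eq_sum_add_ofDigits x (k + 1)
  have hy := ofDigits_eq_sum_add_ofDigits y (k + 1)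
  have := ofDigits_nonneg (fun i => x (i + (k + 1)))
  have := ofDigits_le_one (fun i => y (i + (k + 1)))
  have : 0 < ((b : ℝ) ^ (k + 1))⁻¹ := by have := (x 0).pos; positivity
  have htail : ofDigits (fun i => x (i + (k + 1))) = 0 := by nlinarith
  rw [hx, htail, mul_zero, add_zero]

theorem eq_of_ofDigits_eq_of_irrational {b : ℕ} {x y : ℕ → Fin b} (h : ofDigits x = ofDigits y)
    (hx : Irrational (ofDigits x)) : x = y := by
  funext k
  induction k using Nat.strong_induction_on with
  | _ k ih =>
    rcases lt_trichotomy (x k) (y k) with hlt | heq | hgt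
    · refine absurd ?_ (not_irrational_sum_ofDigitsTerm y (k + 1))
      rwa [← ofDigits_eq_sum_of_ofDigits_eq (fun i hi => (ih i hi).symm) hlt h.symm, ← h]
    · exact heq
    · refine absurd ?_ (not_irrational_sum_ofDigitsTerm x (k + 1))
      rwa [← ofDigits_eq_sum_of_ofDigits_eq ih hgt h]

theorem encard_preimage_ofDigits {b : ℕ} (hb : 1 < b) {S : Set ℝ} (hS : S ⊆ Icc 0 1)
    (hirr : ∀ x ∈ S, Irrational x) : (ofDigits (b := b) ⁻¹' S).encard = S.encard := by
  have hinj : InjOn (ofDigits (b := b)) (ofDigits ⁻¹' S) := fun x hx _ _ h =>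
    eq_of_ofDigits_eq_of_irrational h (hirr _ hx)
  rw [← hinj.encard_image,
    image_preimage_eq_of_subset (hS.trans (ofDigits_SurjOn hb).subset_range)]

end Real

open Real

lemma codingMap_two_eq (a : ℤ) (m : ℕ) (ω : ℕ → Fin 2) :
    codingMap 2 ![a, a + m] ω = expTwoPiI (m * ofDigits ω) := by
  have hterm : ∀ k, ((![a, a + m] (ω k) : ℤ) : ℝ) / ((2 : ℕ) : ℝ) ^ (k + 1) =
      a * ofDigitsTerm (fun _ => Fin.last 1) k + m * ofDigitsTerm ω k := by
    intro k
    simp only [ofDigitsTerm]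
    generalize ω k = i
    fin_cases i <;> simp <;> ring
  have hsum :
      ∑' k, ((![a, a + m] (ω k) : ℤ) : ℝ) / ((2 : ℕ) : ℝ) ^ (k + 1) = m * ofDigits ω + a := by
    rw [tsum_congr hterm,
      (summable_ofDigitsTerm.mul_left _).tsum_add (summable_ofDigitsTerm.mul_left _),
      tsum_mul_left, tsum_mul_left, ← ofDigits, ← ofDigits, ofDigits_const_last_eq_one]
    ring
  rw [codingMap, hsum, ← expTwoPiI_add_intCast _ a]
  rfl

lemma range_codingMap_two (a : ℤ) {m : ℕ} (hm : 0 < m) :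
    range (codingMap 2 ![a, a + m]) = Metric.sphere 0 1 := by
  rw [← range_expTwoPiI]
  refine Subset.antisymm (range_subset_iff.2 fun ω => ⟨_, (codingMap_two_eq a m ω).symm⟩) ?_
  rintro _ ⟨x, rfl⟩
  have ht : Int.fract x / m ∈ Ico (0 : ℝ) 1 := ⟨by positivity, (div_lt_one (by positivity)).2
    ((Int.fract_lt_one x).trans_le (by exact_mod_cast hm))⟩
  refine ⟨digits (Int.fract x / m) 2, ?_⟩
  rw [codingMap_two_eq, ofDigits_digits one_lt_two ht, mul_div_cancel₀ _ (by positivity),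
    expTwoPiI_fract]

lemma codingMap_two_fiber_eq (a : ℤ) (m : ℕ) {t : ℝ} (ht : t ∈ Ioo 0 1) :
    {ω | codingMap 2 ![a, a + m] ω = expTwoPiI t} =
      ofDigits ⁻¹' ((fun j : ℕ => (t + j) / m) '' Iio m) := by
  ext ω
  simp only [mem_ofPred_eq, mem_preimage, mem_image, codingMap_two_eq, expTwoPiI_eq_expTwoPiI_iff]
  constructor
  · rintro ⟨j, hj⟩
    have := ofDigits_nonneg ω
    have := ofDigits_le_one ω
    obtain ⟨ht0, ht1⟩ := ht
    have hj0 : 0 ≤ j := by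
      have : ((-1 : ℤ) : ℝ) < j := by push_cast; nlinarith
      have : (-1 : ℤ) < j := by exact_mod_cast this
      omega
    have hjm : (j : ℝ) < m := by nlinarith
    lift j to ℕ using hj0
    have hjm : j < m := by exact_mod_cast hjm
    refine ⟨j, hjm, ?_⟩
    rw [div_eq_iff (Nat.cast_ne_zero.2 (ne_zero_of_lt hjm))]
    push_cast at hj
    linarith
  · rintro ⟨j, hj, hω⟩
    refine ⟨j, ?_⟩
    rw [← hω, mul_div_cancel₀ _ (Nat.cast_ne_zero.2 (ne_zero_of_lt hj))]
    push_cast; ring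

lemma encard_codingMap_two_fiber (a : ℤ) {m : ℕ} (hm : 0 < m) {t : ℝ} (ht : t ∈ Ioo 0 1)
    (hirr : Irrational t) : {ω | codingMap 2 ![a, a + m] ω = expTwoPiI t}.encard = m := by
  have hm' : (m : ℝ) ≠ 0 := by positivity
  have hpoints : (fun j : ℕ => (t + j) / m) '' Iio m ⊆ Icc 0 1 := by
    rintro _ ⟨j, hj, rfl⟩
    have : (j : ℝ) + 1 ≤ m := by exact_mod_cast hj
    exact ⟨div_nonneg (by linarith [ht.1]) (by positivity),
      (div_le_one (by positivity)).2 (by linarith [ht.2])⟩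
  have hinj : InjOn (fun j : ℕ => (t + j) / m) (Iio m) := fun i _ j _ hij => by
    simpa [div_left_inj' hm'] using hij
  rw [codingMap_two_fiber_eq a m ht, encard_preimage_ofDigits one_lt_two hpoints
    (forall_mem_image.2 fun j _ => (hirr.add_natCast j).div_natCast hm.ne'), hinj.encard_image,
    ← Finset.coe_range, encard_coe_eq_coe_finsetCard, Finset.card_range]

/-- For `f(z) = z²` with lift data `(n₁/2, n₂/2)`, `n₁ < n₂`: the coding map is
surjective onto the unit circle and almost every fiber has exactly `n₂ - n₁`
elements, i.e. `π` is almost `(n₂ - n₁)`-to-one. -/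
theorem coding_map_almost_n_to_one (n₁ n₂ : ℤ) (h : n₁ < n₂) :
    Set.range (codingMap 2 ![n₁, n₂]) = Metric.sphere (0 : ℂ) 1 ∧
    ∀ᵐ p ∂circleMeasure,
      Set.encard {ω : ℕ → Fin 2 | codingMap 2 ![n₁, n₂] ω = p} =
        ((n₂ - n₁).toNat : ℕ∞) := by
  obtain ⟨m, rfl⟩ : ∃ m : ℕ, n₂ = n₁ + m := ⟨(n₂ - n₁).toNat, by omega⟩
  have hm : 0 < m := by omega
  refine ⟨range_codingMap_two n₁ hm, ?_⟩
  filter_upwards [ae_circleMeasure_exists_irrational] with p hp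
  obtain ⟨t, ht, hirr, rfl⟩ := hp
  rw [encard_codingMap_two_fiber n₁ hm ht hirr, add_sub_cancel_left, Int.toNat_natCast]
end

section
/- Let n_1, n_2 be integers and define g_1(x) = x/2 + n_1 and g_2(x) = −x/2 + n_2 on ℝ. Then the unique nonempty compact subset K of ℝ with K = g_1(K) ∪ g_2(K) is the closed interval [min{2n_1, n_2 − n_1}, max{2n_1, n_2 − n_1}]. -/
/-!
The Hutchinson operator `s ↦ g₁ '' s ∪ g₂ '' s` of two `K`-Lipschitz maps is `K`-Lipschitz for
the Hausdorff metric on nonempty compact sets, so for `K < 1` it has at most one fixed point.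
For `g₁ x = x / 2 + n₁`, `g₂ x = -x / 2 + n₂` the interval `I` with endpoints `2 n₁` and
`n₂ - n₁` is such a fixed point: `g₁` fixes `2 n₁`, `g₂` sends `2 n₁` to `n₂ - n₁`, and both send
`n₂ - n₁` to the midpoint of `I`, so `g₁ '' I` and `g₂ '' I` are the two halves of `I`.
-/

open Set Metric TopologicalSpace Function
open scoped NNReal Interval

namespace LipschitzWith

variable {α β : Type*} [PseudoEMetricSpace α] [PseudoEMetricSpace β] {K : ℝ≥0} {f : α → β}

theorem infEDist_image_le (hf : LipschitzWith K f) (x : α) {t : Set α} (ht : t.Nonempty) :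
    infEDist (f x) (f '' t) ≤ K * infEDist x t := by
  have : Nonempty t := ht.to_subtype
  conv_rhs => rw [infEDist, iInf_subtype', ENNReal.mul_iInf (by simp)]
  exact le_iInf fun y => (infEDist_le_edist_of_mem (mem_image_of_mem f y.2)).trans (hf x y)

theorem hausdorffEDist_image_le (hf : LipschitzWith K f) {s t : Set α} (hs : s.Nonempty)
    (ht : t.Nonempty) : hausdorffEDist (f '' s) (f '' t) ≤ K * hausdorffEDist s t := by
  refine hausdorffEDist_le_of_infEDist ?_ ?_ <;> rintro _ ⟨x, hx, rfl⟩
  · grw [hf.infEDist_image_le x ht, infEDist_le_hausdorffEDist_of_mem hx]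
  · grw [hf.infEDist_image_le x hs, infEDist_le_hausdorffEDist_of_mem hx, hausdorffEDist_comm]

end LipschitzWith

namespace TopologicalSpace.NonemptyCompacts

variable {α β : Type*} [EMetricSpace α] [EMetricSpace β]

theorem lipschitzWith_map {K : ℝ≥0} {f : α → β} (hf : LipschitzWith K f) :
    LipschitzWith K (NonemptyCompacts.map f hf.continuous) :=
  fun s t => hf.hausdorffEDist_image_le s.nonempty t.nonempty

def hutchinson (f₁ f₂ : α → α) (hf₁ : Continuous f₁) (hf₂ : Continuous f₂)
    (s : NonemptyCompacts α) : NonemptyCompacts α :=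
  s.map f₁ hf₁ ⊔ s.map f₂ hf₂

theorem lipschitzWith_hutchinson {K : ℝ≥0} {f₁ f₂ : α → α} (hf₁ : LipschitzWith K f₁)
    (hf₂ : LipschitzWith K f₂) :
    LipschitzWith K (hutchinson f₁ f₂ hf₁.continuous hf₂.continuous) := by
  have h := lipschitz_sup.comp ((lipschitzWith_map hf₁).prodMk (lipschitzWith_map hf₂))
  rwa [max_self, one_mul] at h

end TopologicalSpace.NonemptyCompacts

def IsAttractor {α : Type*} [TopologicalSpace α] (f₁ f₂ : α → α) (s : Set α) : Prop :=
  s.Nonempty ∧ IsCompact s ∧ s = f₁ '' s ∪ f₂ '' s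

theorem IsAttractor.eq {α : Type*} [MetricSpace α] {K : ℝ≥0} {f₁ f₂ : α → α} (hK : K < 1)
    (hf₁ : LipschitzWith K f₁) (hf₂ : LipschitzWith K f₂) {s t : Set α}
    (hs : IsAttractor f₁ f₂ s) (ht : IsAttractor f₁ f₂ t) : s = t := by
  have hfix {u : Set α} (hu : IsAttractor f₁ f₂ u) :
      IsFixedPt (NonemptyCompacts.hutchinson f₁ f₂ hf₁.continuous hf₂.continuous)
        ⟨⟨u, hu.2.1⟩, hu.1⟩ :=
    NonemptyCompacts.ext hu.2.2.symm
  exact congrArg SetLike.coe <| ContractingWith.fixedPoint_unique'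
    ⟨hK, NonemptyCompacts.lipschitzWith_hutchinson hf₁ hf₂⟩ (hfix hs) (hfix ht)

theorem Set.uIcc_union_uIcc {α : Type*} [LinearOrder α] {a b c : α} (h : b ∈ [[a, c]]) :
    [[a, b]] ∪ [[b, c]] = [[a, c]] :=
  (union_subset (uIcc_subset_uIcc_left h) (uIcc_subset_uIcc_right h)).antisymm
    uIcc_subset_uIcc_union_uIcc

theorem lipschitzWith_div_two_add (c : ℝ) : LipschitzWith 2⁻¹ fun x : ℝ => x / 2 + c :=
  .of_dist_le_mul fun x y => le_of_eq (by
    rw [dist_add_right, Real.dist_eq, Real.dist_eq, ← sub_div, abs_div]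
    simp [div_eq_inv_mul])

theorem lipschitzWith_neg_div_two_add (c : ℝ) : LipschitzWith 2⁻¹ fun x : ℝ => -x / 2 + c :=
  .of_dist_le_mul fun x y => le_of_eq (by
    rw [dist_add_right, Real.dist_eq, Real.dist_eq, ← sub_div, neg_sub_neg, abs_div, abs_sub_comm]
    simp [div_eq_inv_mul])

theorem isAttractor_uIcc (n₁ n₂ : ℝ) :
    IsAttractor (fun x : ℝ => x / 2 + n₁) (fun x => -x / 2 + n₂) [[2 * n₁, n₂ - n₁]] := by
  refine ⟨nonempty_uIcc, isCompact_uIcc, ?_⟩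
  rw [← image_image (· + n₁) (· / 2), image_div_const_uIcc, image_add_const_uIcc,
    ← image_image (· + n₂) (fun x => -x / 2), ← image_image (· / 2) Neg.neg, image_neg_uIcc,
    image_div_const_uIcc, image_add_const_uIcc]
  have hmid : (n₂ - n₁) / 2 + n₁ ∈ [[2 * n₁, n₂ - n₁]] := by
    rcases le_total (2 * n₁) (n₂ - n₁) with h | h
    · exact Icc_subset_uIcc ⟨by linarith, by linarith⟩
    · exact Icc_subset_uIcc' ⟨by linarith, by linarith⟩
  rw [uIcc_comm (-(2 * n₁) / 2 + n₂), show -(n₂ - n₁) / 2 + n₂ = (n₂ - n₁) / 2 + n₁ by ring,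
    show -(2 * n₁) / 2 + n₂ = n₂ - n₁ by ring, show 2 * n₁ / 2 + n₁ = 2 * n₁ by ring,
    uIcc_union_uIcc hmid]

/-- For `g₁(x) = x/2 + n₁`, `g₂(x) = -x/2 + n₂` with integers `n₁, n₂`, the
attractor is the closed interval `[min(2n₁, n₂ - n₁), max(2n₁, n₂ - n₁)]`. -/
theorem attractor_eq_Icc_mixed (n₁ n₂ : ℤ) (K : Set ℝ) :
    (K.Nonempty ∧ IsCompact K ∧
      K = (fun x : ℝ => x / 2 + (n₁ : ℝ)) '' K ∪
          (fun x : ℝ => -x / 2 + (n₂ : ℝ)) '' K) ↔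
    K = Set.Icc (min (2 * (n₁ : ℝ)) ((n₂ : ℝ) - (n₁ : ℝ)))
          (max (2 * (n₁ : ℝ)) ((n₂ : ℝ) - (n₁ : ℝ))) := by
  change IsAttractor _ _ K ↔ K = [[2 * (n₁ : ℝ), n₂ - n₁]]
  exact ⟨fun hK => hK.eq (by norm_num) (lipschitzWith_div_two_add _)
    (lipschitzWith_neg_div_two_add _) (isAttractor_uIcc n₁ n₂),
    fun hK => hK ▸ isAttractor_uIcc n₁ n₂⟩
end

section
/- Let g_1(z) = ((−1−i)/2)·z + 1 + i and g_2(z) = ((−1+i)/2)·z + 2 on ℂ. Then the unique nonempty compact subset K of ℂ with K = g_1(K) ∪ g_2(K) is the closed triangle (the convex hull) with vertices 0, 2 and 1 + i. -/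
/-!
Two compact nonempty sets fixed by the same family of `K`-Lipschitz maps, `K < 1`, coincide:
the Hausdorff distance between them is finite and contracted by the factor `K`, hence zero.
Both `g₁` and `g₂` multiply distances by `1/√2`. The triangle `T` with vertices `0, 2, 1 + i` is
such a fixed set: the maps are `ℝ`-affine, so `g₁(T)` and `g₂(T)` are the triangles with vertices
`1 + i, 0, 1` and `2, 1 + i, 1`, the two halves of `T` cut along its median from `1 + i`.
-/

open Metric Set Complex
open scoped NNReal ENNReal

section Hutchinson

variable {α ι : Type*}

theorem LipschitzWith.infEDist_image_le_s11 [PseudoEMetricSpace α] {K : ℝ≥0} {f : α → α}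
    (hf : LipschitzWith K f) (x : α) {t : Set α} (ht : t.Nonempty) :
    infEDist (f x) (f '' t) ≤ K * infEDist x t := by
  have := ht.to_subtype
  conv_rhs => rw [infEDist, iInf_subtype', ENNReal.mul_iInf (by simp)]
  exact le_iInf fun y => (infEDist_le_edist_of_mem (mem_image_of_mem f y.2)).trans (hf x y)

theorem LipschitzWith.hausdorffEDist_image_le_s11 [PseudoEMetricSpace α] {K : ℝ≥0} {f : α → α}
    (hf : LipschitzWith K f) {s t : Set α} (hs : s.Nonempty) (ht : t.Nonempty) :
    hausdorffEDist (f '' s) (f '' t) ≤ K * hausdorffEDist s t := by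
  refine hausdorffEDist_le_of_infEDist ?_ ?_ <;> rintro _ ⟨x, hx, rfl⟩
  · exact (hf.infEDist_image_le_s11 x ht).trans
      (mul_le_mul_right (infEDist_le_hausdorffEDist_of_mem hx) _)
  · rw [hausdorffEDist_comm]
    exact (hf.infEDist_image_le_s11 x hs).trans
      (mul_le_mul_right (infEDist_le_hausdorffEDist_of_mem hx) _)

theorem IsCompact.eq_of_eq_iUnion_image [MetricSpace α] {K : ℝ≥0} {f : ι → α → α}
    (hK : K < 1) (hf : ∀ i, LipschitzWith K (f i)) {s t : Set α}
    (hs : s.Nonempty) (hsc : IsCompact s) (hs_eq : s = ⋃ i, f i '' s)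
    (ht : t.Nonempty) (htc : IsCompact t) (ht_eq : t = ⋃ i, f i '' t) : s = t := by
  set d := hausdorffEDist s t
  have hd : d ≠ ⊤ :=
    hausdorffEDist_ne_top_of_nonempty_of_bounded hs ht hsc.isBounded htc.isBounded
  have hcontract : d ≤ K * d := calc
    d = hausdorffEDist (⋃ i, f i '' s) (⋃ i, f i '' t) := by rw [← hs_eq, ← ht_eq]
    _ ≤ ⨆ i, hausdorffEDist (f i '' s) (f i '' t) := hausdorffEDist_iUnion_le
    _ ≤ K * d := iSup_le fun i => (hf i).hausdorffEDist_image_le_s11 hs ht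
  have hd0 : d = 0 := by
    by_contra h0
    exact (ENNReal.mul_lt_mul_left h0 hd (ENNReal.coe_lt_one_iff.2 hK)).trans_eq (one_mul d)
      |>.not_ge hcontract
  exact (hsc.isClosed.hausdorffEDist_zero_iff htc.isClosed).1 hd0

theorem IsCompact.eq_of_eq_union_image [MetricSpace α] {K : ℝ≥0} {f g : α → α} (hK : K < 1)
    (hf : LipschitzWith K f) (hg : LipschitzWith K g) {s t : Set α}
    (hs : s.Nonempty) (hsc : IsCompact s) (hs_eq : s = f '' s ∪ g '' s)
    (ht : t.Nonempty) (htc : IsCompact t) (ht_eq : t = f '' t ∪ g '' t) : s = t := by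
  have hunion (u : Set α) : f '' u ∪ g '' u = ⋃ b, cond b f g '' u := by
    rw [union_eq_iUnion]; congr 1; ext b; cases b <;> rfl
  rw [hunion] at hs_eq ht_eq
  exact hsc.eq_of_eq_iUnion_image hK (Bool.forall_bool.2 ⟨hg, hf⟩) hs hs_eq ht htc ht_eq

end Hutchinson

section Segment

variable {𝕜 E : Type*} [Field 𝕜] [LinearOrder 𝕜] [IsStrictOrderedRing 𝕜] [AddCommGroup E]
  [Module 𝕜 E]

theorem segment_eq_union_of_mem {a b m : E} (hm : m ∈ segment 𝕜 a b) :
    segment 𝕜 a b = segment 𝕜 a m ∪ segment 𝕜 m b := by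
  refine Subset.antisymm (fun z hz => ?_) <| union_subset
    ((convex_segment a b).segment_subset (left_mem_segment 𝕜 a b) hm)
    ((convex_segment a b).segment_subset hm (right_mem_segment 𝕜 a b))
  rw [mem_segment_iff_wbtw] at hm hz
  rw [mem_union, mem_segment_iff_wbtw, mem_segment_iff_wbtw]
  rcases eq_or_ne a b with rfl | hab
  · simp_all
  have hray : SameRay 𝕜 (m -ᵥ a) (z -ᵥ a) :=
    hm.sameRay_vsub_left.trans hz.sameRay_vsub_left.symm
      fun h => absurd (vsub_eq_zero_iff_eq.1 h) hab.symm
  exact (wbtw_total_of_sameRay_vsub_left hray).symm.imp id hz.trans_left_right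

theorem convexHull_triple_eq_union_of_mem_segment (a : E) {b c m : E}
    (hm : m ∈ segment 𝕜 b c) :
    convexHull 𝕜 {a, b, c} = convexHull 𝕜 {a, b, m} ∪ convexHull 𝕜 {a, m, c} := by
  simp_rw [← convexJoin_singleton_segment, segment_eq_union_of_mem hm, convexJoin_union_right]

end Segment

theorem lipschitzWith_mul_add {α : Type*} [NonUnitalSeminormedRing α] (a b : α) :
    LipschitzWith ‖a‖₊ (fun z => a * z + b) :=
  LipschitzWith.of_dist_le_mul fun z w => by
    simpa [dist_eq_norm, ← mul_sub] using norm_mul_le a (z - w)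

theorem image_convexHull_mul_add {𝕜 A : Type*} [CommRing 𝕜] [PartialOrder 𝕜] [Ring A]
    [Algebra 𝕜 A] (a b : A) (s : Set A) :
    (fun z => a * z + b) '' convexHull 𝕜 s = convexHull 𝕜 ((fun z => a * z + b) '' s) :=
  ((LinearMap.mulLeft 𝕜 a).toAffineMap + AffineMap.const 𝕜 A b).image_convexHull s

theorem convexHull_triangle_eq_union_image :
    convexHull ℝ ({0, 2, 1 + I} : Set ℂ) =
      (fun z : ℂ => ((-1 - I) / 2) * z + (1 + I)) '' convexHull ℝ {0, 2, 1 + I} ∪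
        (fun z : ℂ => ((-1 + I) / 2) * z + 2) '' convexHull ℝ {0, 2, 1 + I} := by
  have hg₁ : (fun z : ℂ => ((-1 - I) / 2) * z + (1 + I)) '' {0, 2, 1 + I} = {1 + I, 0, 1} := by
    simp only [image_insert_eq, image_singleton]
    rw [show (-1 - I) / 2 * 0 + (1 + I) = 1 + I by ring,
      show (-1 - I) / 2 * 2 + (1 + I) = 0 by ring,
      show (-1 - I) / 2 * (1 + I) + (1 + I) = 1 by linear_combination (-1 / 2 : ℂ) * I_sq]
  have hg₂ : (fun z : ℂ => ((-1 + I) / 2) * z + 2) '' {0, 2, 1 + I} = {1 + I, 1, 2} := by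
    simp only [image_insert_eq, image_singleton]
    rw [show (-1 + I) / 2 * 0 + 2 = 2 by ring, show (-1 + I) / 2 * 2 + 2 = 1 + I by ring,
      show (-1 + I) / 2 * (1 + I) + 2 = 1 by linear_combination (1 / 2 : ℂ) * I_sq,
      insert_comm, pair_comm]
  have hmid : (1 : ℂ) ∈ segment ℝ 0 2 :=
    ⟨1 / 2, 1 / 2, by norm_num, by norm_num, by norm_num, by norm_num⟩
  have hT : ({0, 2, 1 + I} : Set ℂ) = {1 + I, 0, 2} := by
    rw [pair_comm, insert_comm]
  rw [image_convexHull_mul_add, image_convexHull_mul_add, hg₁, hg₂, hT,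
    convexHull_triple_eq_union_of_mem_segment (1 + I) hmid]

/-- For `g₁(z) = ((-1-i)/2)z + 1 + i` and `g₂(z) = ((-1+i)/2)z + 2` on `ℂ`,
the attractor is the closed triangle (convex hull) with vertices `0`, `2`
and `1 + i`. -/
theorem attractor_eq_triangle (K : Set ℂ) :
    (K.Nonempty ∧ IsCompact K ∧
      K = (fun z : ℂ => ((-1 - Complex.I) / 2) * z + 1 + Complex.I) '' K ∪
          (fun z : ℂ => ((-1 + Complex.I) / 2) * z + 2) '' K) ↔
    K = convexHull ℝ ({0, 2, 1 + Complex.I} : Set ℂ) := by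
  simp only [add_assoc _ (1 : ℂ) I]
  have hnorm : ‖((-1 + I) / 2 : ℂ)‖₊ = ‖((-1 - I) / 2 : ℂ)‖₊ := by
    rw [← nnnorm_star]; simp [sub_eq_add_neg]
  have hK : ‖((-1 - I) / 2 : ℂ)‖₊ < 1 := by
    rw [← NNReal.coe_lt_one, coe_nnnorm, norm_div, div_lt_one (by simp), norm_def,
      Real.sqrt_lt' (by norm_num)]
    norm_num [normSq_apply]
  have hT_ne : (convexHull ℝ ({0, 2, 1 + I} : Set ℂ)).Nonempty :=
    ⟨0, subset_convexHull ℝ _ (by simp)⟩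
  have hT_compact : IsCompact (convexHull ℝ ({0, 2, 1 + I} : Set ℂ)) :=
    (toFinite _).isCompact_convexHull (𝕜 := ℝ)
  refine ⟨fun ⟨hne, hc, heq⟩ => ?_, ?_⟩
  · exact hc.eq_of_eq_union_image hK (lipschitzWith_mul_add _ _)
      (hnorm ▸ lipschitzWith_mul_add _ _) hne heq hT_ne hT_compact
      convexHull_triangle_eq_union_image
  · rintro rfl
    exact ⟨hT_ne, hT_compact, convexHull_triangle_eq_union_image⟩
end

section
/- Fix μ_1, μ_2 ∈ {(1+i)/2, (1−i)/2, (−1+i)/2, (−1−i)/2} and β_1, β_2 ∈ (1+i)ℤ[i], set g_j(z) = μ_j·z + β_j on ℂ, and let K be the unique nonempty compact subset of ℂ with K = g_1(K) ∪ g_2(K). If K has positive two-dimensional Lebesgue measure, then there exists a set T of affine maps of ℂ, each of the form t(z) = αz + 2β with α ∈ {1, i, −1, −i} and β ∈ ℤ[i], such that ℂ = ⋃_{t ∈ T} t(K) and the Lebesgue measure of t(K) ∩ t'(K) is zero for all distinct t, t' ∈ T. (Instance, for the Lattès map, of the Tiling Theorem: K tiles φ^{-1}(J) = ℂ under deck transformations.)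 -/
/-
Write `gⱼ = c • dⱼ` with `c = (1 + i)/2` and `dⱼ(z) = αⱼ z + 2γⱼ` deck transformations. Because
`c⁻¹ = 1 - i` is a Gaussian integer, conjugating a deck transformation by `z ↦ c z` gives again a
deck transformation, so every composition `g_w` along a word of length `n` is `cⁿ • d_w` with `d_w`
a deck transformation; hence `g_F⁻¹ ∘ g_w` is one whenever `|w| = |F|`. These maps cover the
blow-up `g_F⁻¹(K)` by copies of `K` with null overlaps, since the `2ⁿ` pieces `g_w(K)` of `K` have
measure `|K|/2ⁿ` each. Choosing the words `F` ever longer (each extending the previous one) so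
that `g_F` maps a fixed ball into a smaller and smaller neighbourhood of a Lebesgue density point
of `K`, the blow-ups exhaust `ℂ` up to a null set. The union of all tiles is locally finite, hence
closed, and a closed co-null subset of `ℂ` is everything.
-/

open MeasureTheory Metric Set Filter Topology Complex
open scoped ENNReal

def gaussianIntegers : Subring ℂ := GaussianInt.toComplex.range

lemma mem_gaussianIntegers {z : ℂ} : z ∈ gaussianIntegers ↔ ∃ a b : ℤ, z = a + b * I := by
  constructor
  · rintro ⟨x, rfl⟩
    exact ⟨x.re, x.im, GaussianInt.toComplex_def x⟩
  · rintro ⟨a, b, rfl⟩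
    exact ⟨⟨a, b⟩, GaussianInt.toComplex_def' a b⟩

lemma finite_gaussianIntegers_inter_closedBall (M : ℝ) :
    ((gaussianIntegers : Set ℂ) ∩ closedBall 0 M).Finite := by
  let N := ⌈M⌉
  refine ((finite_Icc (-N) N).prod (finite_Icc (-N) N)).image
    (fun ab : ℤ × ℤ => (ab.1 : ℂ) + ab.2 * I) |>.subset ?_
  rintro z ⟨hz, hzM⟩
  obtain ⟨a, b, rfl⟩ := mem_gaussianIntegers.1 hz
  rw [mem_closedBall_zero_iff] at hzM
  have hN : ∀ k : ℤ, |(k : ℝ)| ≤ M → k ∈ Icc (-N) N := fun k hk => by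
    rw [mem_Icc, ← abs_le]
    exact_mod_cast hk.trans (Int.le_ceil M)
  refine ⟨(a, b), ⟨hN a ?_, hN b ?_⟩, rfl⟩
  · simpa using (abs_re_le_norm _).trans hzM
  · simpa using (abs_im_le_norm _).trans hzM

lemma pow_four_eq_one_iff {α : ℂ} : α ^ 4 = 1 ↔ α ∈ ({1, I, -1, -I} : Set ℂ) := by
  have h : α ^ 4 - 1 = (α - 1) * (α - I) * (α - -1) * (α - -I) := by
    linear_combination (α ^ 2 - 1) * I_sq
  simp only [← sub_eq_zero (a := α ^ 4), h, mul_eq_zero, sub_eq_zero, mem_insert_iff,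
    mem_singleton_iff, or_assoc]

lemma mem_gaussianIntegers_of_pow_four_eq_one {α : ℂ} (hα : α ^ 4 = 1) :
    α ∈ gaussianIntegers := by
  rw [mem_gaussianIntegers]
  rcases pow_four_eq_one_iff.1 hα with rfl | rfl | rfl | rfl
  exacts [⟨1, 0, by simp⟩, ⟨0, 1, by simp⟩, ⟨-1, 0, by simp⟩, ⟨0, -1, by simp⟩]

lemma measure_inter_eq_zero_of_measure_iUnion_eq_sum {α ι : Type*} [MeasurableSpace α]
    {μ : Measure α} [Fintype ι] {s : ι → Set α} (hs : ∀ i, MeasurableSet (s i))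
    (hfin : ∑ i, μ (s i) ≠ ∞) (hsum : μ (⋃ i, s i) = ∑ i, μ (s i)) {i j : ι} (hij : i ≠ j) :
    μ (s i ∩ s j) = 0 := by
  classical
  set U := ⋃ k ∈ Finset.univ.erase i, s k
  have hunion : s i ∪ U = ⋃ k, s k := by
    refine (union_subset (subset_iUnion s i) (iUnion₂_subset fun k _ => subset_iUnion s k))
      |>.antisymm (iUnion_subset fun k => ?_)
    by_cases hk : k = i
    · exact hk ▸ subset_union_left
    · exact (subset_biUnion_of_mem (Finset.mem_erase.2 ⟨hk, Finset.mem_univ k⟩)).trans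
        subset_union_right
  have key : μ (⋃ k, s k) + μ (s i ∩ U) ≤ μ (⋃ k, s k) + 0 := by
    calc μ (⋃ k, s k) + μ (s i ∩ U) = μ (s i) + μ U := by
          rw [← hunion, measure_union_add_inter _ (Finset.measurableSet_biUnion _ fun k _ => hs k)]
      _ ≤ μ (s i) + ∑ k ∈ Finset.univ.erase i, μ (s k) := by
          gcongr
          exact measure_biUnion_finset_le _ _
      _ = μ (⋃ k, s k) + 0 := by
          rw [Finset.add_sum_erase _ (fun k => μ (s k)) (Finset.mem_univ i), hsum, add_zero]
  refine measure_mono_null (inter_subset_inter_right _ ?_) (nonpos_iff_eq_zero.1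
    ((ENNReal.add_le_add_iff_left (hsum ▸ hfin)).1 key))
  exact subset_biUnion_of_mem (Finset.mem_erase.2 ⟨hij.symm, Finset.mem_univ j⟩)

lemma exists_density_point {β : Type*} [MetricSpace β] [MeasurableSpace β] [BorelSpace β]
    [SecondCountableTopology β] [HasBesicovitchCovering β] (μ : Measure β)
    [IsLocallyFiniteMeasure μ] {s : Set β} (hs : MeasurableSet s) (hpos : 0 < μ s) :
    ∃ z ∈ s, Tendsto (fun r => μ (closedBall z r \ s) / μ (closedBall z r)) (𝓝[>] 0) (𝓝 0) := by
  have : (ae (μ.restrict s)).NeBot :=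
    ae_neBot.2 fun h => hpos.ne' (Measure.restrict_eq_zero.1 h)
  obtain ⟨z, hzs, hz⟩ := ((ae_restrict_mem hs).and (ae_restrict_of_ae
    (Besicovitch.ae_tendsto_measure_inter_div_of_measurableSet μ hs.compl))).exists
  refine ⟨z, hzs, ?_⟩
  simpa [indicator_of_notMem (show z ∉ sᶜ from fun h => h hzs), sdiff_eq, inter_comm] using hz

lemma measure_compl_iUnion_eq_zero {α : Type*} [PseudoMetricSpace α] [MeasurableSpace α]
    (μ : Measure α) (z : α) {B : ℕ → Set α}
    (h : ∀ R : ℝ, ∀ ε : ℝ≥0∞, 0 < ε → ∃ k, μ (closedBall z R \ B k) ≤ ε) :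
    μ (⋃ k, B k)ᶜ = 0 := by
  have hcover : (⋃ k, B k)ᶜ ⊆ ⋃ R : ℕ, closedBall z R \ ⋃ k, B k := fun x hx =>
    mem_iUnion.2 ⟨⌈dist x z⌉₊, mem_closedBall.2 (Nat.le_ceil _), hx⟩
  refine measure_mono_null hcover (measure_iUnion_null fun R => ?_)
  refine le_antisymm (ENNReal.le_of_forall_pos_le_add fun ε hε _ => ?_) bot_le
  obtain ⟨k, hk⟩ := h R ε (by exact_mod_cast hε)
  exact (measure_mono (sdiff_subset_sdiff_right (subset_iUnion B k))).trans (by simpa using hk)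

lemma exists_nested_words {α ι : Type*} [PseudoMetricSpace α] [MeasurableSpace α]
    (μ : Measure α) (z : α) (P : List ι → Set α)
    (hP : ∀ r : List ι, ∀ R : ℝ, 0 < R → ∀ ε : ℝ≥0∞, 0 < ε →
      ∃ u, μ (closedBall z R \ P (u ++ r)) ≤ ε) :
    ∃ F : ℕ → List ι, (∀ k, ∃ u, F (k + 1) = u ++ F k) ∧
      ∀ R : ℝ, ∀ ε : ℝ≥0∞, 0 < ε → ∃ k, μ (closedBall z R \ P (F k)) ≤ ε := by
  choose W hW using fun r (k : ℕ) =>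
    hP r (k + 1) (by positivity) ((k + 1 : ℝ≥0∞)⁻¹) (by simp)
  let F : ℕ → List ι := fun k => Nat.rec [] (fun k r => W r k ++ r) k
  refine ⟨F, fun k => ⟨_, rfl⟩, fun R ε hε => ?_⟩
  obtain ⟨n, hn⟩ := ENNReal.exists_inv_nat_lt hε.ne'
  let k := max n ⌈R⌉₊
  refine ⟨k + 1, (measure_mono (sdiff_subset_sdiff_left (closedBall_subset_closedBall ?_))).trans
      ((hW (F k) k).trans ((ENNReal.inv_le_inv.2 ?_).trans hn.le))⟩
  · linarith [Nat.le_ceil R, (Nat.cast_le (α := ℝ)).2 (le_max_right n ⌈R⌉₊)]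
  · exact_mod_cast (le_max_left n ⌈R⌉₊).trans (Nat.le_succ k)

abbrev AffinePair := ℂ × ℂ

namespace AffinePair

def toFun (p : AffinePair) (z : ℂ) : ℂ := p.1 * z + p.2

def comp (p q : AffinePair) : AffinePair := (p.1 * q.1, p.1 * q.2 + p.2)

noncomputable def inv (p : AffinePair) : AffinePair := (p.1⁻¹, -(p.1⁻¹ * p.2))

lemma toFun_one : toFun (1, 0) = id := by
  funext z
  simp [toFun]

lemma comp_assoc (p q r : AffinePair) : (p.comp q).comp r = p.comp (q.comp r) := by
  simp only [comp, Prod.mk.injEq]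
  constructor <;> ring

lemma one_comp (p : AffinePair) : comp (1, 0) p = p := by
  simp [comp]

lemma toFun_comp (p q : AffinePair) : (p.comp q).toFun = p.toFun ∘ q.toFun := by
  funext z
  simp only [toFun, comp, Function.comp]
  ring

lemma image_toFun_comp (p q : AffinePair) (s : Set ℂ) :
    (p.comp q).toFun '' s = p.toFun '' (q.toFun '' s) := by
  rw [toFun_comp, image_comp]

lemma continuous_toFun (p : AffinePair) : Continuous p.toFun := by
  unfold toFun
  fun_prop

lemma toFun_surjective {p : AffinePair} (hp : p.1 ≠ 0) : Function.Surjective p.toFun :=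
  fun z => ⟨(z - p.2) / p.1, by simp only [toFun]; field_simp; ring⟩

lemma dist_toFun (p : AffinePair) (x y : ℂ) :
    dist (p.toFun x) (p.toFun y) = ‖p.1‖ * dist x y := by
  simp only [toFun, dist_eq, add_sub_add_right_eq_sub, ← mul_sub, norm_mul]

lemma image_toFun_inv_comp {p : AffinePair} (hp : p.1 ≠ 0) (q : AffinePair) (s : Set ℂ) :
    (p.inv.comp q).toFun '' s = p.toFun ⁻¹' (q.toFun '' s) := by
  ext x
  simp only [mem_image, mem_preimage, toFun, comp, inv]
  refine exists_congr fun y => and_congr_right fun _ => ?_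
  constructor
  · rintro rfl
    field_simp
    ring
  · intro h
    field_simp
    linear_combination h

lemma inv_comp_comp_cancel {u p : AffinePair} (hu : u.1 ≠ 0) (hp : p.1 ≠ 0) (q : AffinePair) :
    (u.comp p).inv.comp (u.comp q) = p.inv.comp q := by
  simp only [comp, inv, Prod.mk.injEq]
  constructor
  · field_simp
  · field_simp
    ring

lemma smul_inv_comp_smul {c : ℂ} (hc : c ≠ 0) {p : AffinePair} (hp : p.1 ≠ 0)
    (q : AffinePair) :
    (c • p).inv.comp (c • q) = p.inv.comp q := by
  simp only [comp, inv, Prod.smul_fst, Prod.smul_snd, smul_eq_mul, Prod.mk.injEq]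
  constructor <;> field_simp

lemma volume_image_toFun (p : AffinePair) (s : Set ℂ) :
    volume (p.toFun '' s) = ENNReal.ofReal (‖p.1‖ ^ 2) * volume s := by
  have h : p.toFun '' s = (· + p.2) '' (Algebra.lmul ℝ ℂ p.1 '' s) := by
    rw [← image_comp]
    rfl
  rw [h, image_add_right, measure_preimage_add_right, Measure.addHaar_image_linearMap,
    ← Algebra.norm_apply, Algebra.norm_complex_apply, normSq_eq_norm_sq,
    abs_of_nonneg (sq_nonneg _)]

lemma volume_preimage_toFun_eq_zero {p : AffinePair} (hp : p.1 ≠ 0) {s : Set ℂ}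
    (hs : volume s = 0) : volume (p.toFun ⁻¹' s) = 0 := by
  have h := volume_image_toFun p (p.toFun ⁻¹' s)
  rw [image_preimage_eq s (toFun_surjective hp), hs, eq_comm, mul_eq_zero] at h
  exact h.resolve_left (by simpa using hp)

def IsDeck (p : AffinePair) : Prop := p.1 ^ 4 = 1 ∧ ∃ β ∈ gaussianIntegers, p.2 = 2 * β

namespace IsDeck

variable {p q : AffinePair}

lemma fst_ne_zero (hp : p.IsDeck) : p.1 ≠ 0 := by
  rintro h
  simpa [h] using hp.1

lemma norm_fst (hp : p.IsDeck) : ‖p.1‖ = 1 :=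
  norm_eq_one_of_pow_eq_one hp.1 (by norm_num)

lemma comp (hp : p.IsDeck) (hq : q.IsDeck) : (p.comp q).IsDeck := by
  obtain ⟨hp1, β, hβ, hp2⟩ := hp
  obtain ⟨hq1, γ, hγ, hq2⟩ := hq
  refine ⟨by rw [AffinePair.comp, mul_pow, hp1, hq1, one_mul], p.1 * γ + β,
    add_mem (mul_mem (mem_gaussianIntegers_of_pow_four_eq_one hp1) hγ) hβ, ?_⟩
  simp only [AffinePair.comp, hp2, hq2]
  ring

lemma inv (hp : p.IsDeck) : p.inv.IsDeck := by
  obtain ⟨hp1, β, hβ, hp2⟩ := hp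
  have hinv : p.1⁻¹ = p.1 ^ 3 := inv_eq_of_mul_eq_one_right (by rw [← pow_succ', hp1])
  refine ⟨by rw [AffinePair.inv, inv_pow, hp1, inv_one], -(p.1 ^ 3 * β),
    neg_mem (mul_mem (pow_mem (mem_gaussianIntegers_of_pow_four_eq_one hp1) 3) hβ), ?_⟩
  simp only [AffinePair.inv, hinv, hp2]
  ring

lemma mul_snd (hp : p.IsDeck) {c : ℂ} (hc : c ∈ gaussianIntegers) : IsDeck (p.1, c * p.2) := by
  obtain ⟨hp1, β, hβ, hp2⟩ := hp
  exact ⟨hp1, c * β, mul_mem hc hβ, by rw [hp2]; ring⟩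

lemma exists_toFun_eq (hp : p.IsDeck) :
    ∃ α β : ℂ, α ∈ ({1, I, -1, -I} : Set ℂ) ∧ (∃ a b : ℤ, β = a + b * I) ∧
      p.toFun = fun z => α * z + 2 * β := by
  obtain ⟨hp1, β, hβ, hp2⟩ := hp
  exact ⟨p.1, β, pow_four_eq_one_iff.1 hp1, mem_gaussianIntegers.1 hβ, by rw [← hp2]; rfl⟩

end IsDeck

lemma finite_setOf_isDeck_image_inter_ball {K : Set ℂ} (hK : Bornology.IsBounded K) (x : ℂ) :
    {p : AffinePair | IsDeck p ∧ (p.toFun '' K ∩ ball x 1).Nonempty}.Finite := by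
  obtain ⟨C, hC⟩ := hK.exists_norm_le
  refine ((toFinite ({1, I, -1, -I} : Set ℂ)).prod
    (finite_gaussianIntegers_inter_closedBall (‖x‖ + 1 + C))).image
    (fun q : ℂ × ℂ => (q.1, 2 * q.2)) |>.subset ?_
  rintro p ⟨hp, _, ⟨y, hy, rfl⟩, hyx⟩
  have hpy : ‖p.1 * y‖ ≤ C := by rw [norm_mul, hp.norm_fst, one_mul]; exact hC y hy
  obtain ⟨hp1, β, hβ, hp2⟩ := hp
  refine ⟨(p.1, β), ⟨pow_four_eq_one_iff.1 hp1, hβ, ?_⟩, Prod.ext rfl hp2.symm⟩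
  rw [mem_ball, dist_eq] at hyx
  rw [mem_closedBall_zero_iff]
  calc ‖β‖ ≤ ‖2 * β‖ := by rw [norm_mul, RCLike.norm_ofNat]; linarith [norm_nonneg β]
    _ = ‖(toFun p y - x) + x - p.1 * y‖ := by rw [toFun, hp2]; ring_nf
    _ ≤ ‖toFun p y - x‖ + ‖x‖ + ‖p.1 * y‖ :=
        (norm_sub_le _ _).trans (by gcongr; exact norm_add_le _ _)
    _ ≤ ‖x‖ + 1 + C := by linarith

lemma isClosed_biUnion_image_of_isDeck {K : Set ℂ} (hKc : IsCompact K) {T : Set (ℂ → ℂ)}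
    (hT : ∀ t ∈ T, ∃ p, IsDeck p ∧ t = p.toFun) : IsClosed (⋃ t ∈ T, t '' K) := by
  rw [biUnion_eq_iUnion]
  refine LocallyFinite.isClosed_iUnion (fun x => ⟨ball x 1, ball_mem_nhds x one_pos, ?_⟩)
    fun t => ?_
  · refine (((finite_setOf_isDeck_image_inter_ball hKc.isBounded x).image toFun).preimage
      Subtype.val_injective.injOn).subset ?_
    rintro ⟨t, ht⟩ hne
    obtain ⟨p, hp, rfl⟩ := hT t ht
    exact ⟨p, ⟨hp, hne⟩, rfl⟩
  · obtain ⟨p, -, hp⟩ := hT t t.2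
    rw [hp]
    exact (hKc.image (continuous_toFun p)).isClosed

section Words

variable {ι : Type*} (g : ι → AffinePair) {c : ℂ} {K : Set ℂ}

def composeWord : List ι → AffinePair
  | [] => (1, 0)
  | i :: w => (g i).comp (composeWord w)

lemma composeWord_append (u w : List ι) :
    composeWord g (u ++ w) = (composeWord g u).comp (composeWord g w) := by
  induction u with
  | nil => exact (one_comp _).symm
  | cons i u ih => rw [List.cons_append, composeWord, composeWord, ih, comp_assoc]

lemma exists_isDeck_composeWord_eq_smul (hc : c⁻¹ ∈ gaussianIntegers)
    (hg : ∀ i, ∃ d, IsDeck d ∧ g i = c • d) (w : List ι) :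
    ∃ d, IsDeck d ∧ composeWord g w = c ^ w.length • d := by
  induction w with
  | nil => exact ⟨(1, 0), ⟨one_pow 4, 0, zero_mem _, by simp⟩, by simp [composeWord]⟩
  | cons i w ih =>
    obtain ⟨d, hd, hgi⟩ := hg i
    obtain ⟨e, he, hw⟩ := ih
    -- `(c • d) ∘ (cⁿ • e) = cⁿ⁺¹ • ((d.1, c⁻ⁿ * d.2) ∘ e)`, and `c⁻ⁿ` is a Gaussian integer
    refine ⟨comp (d.1, c⁻¹ ^ w.length * d.2) e, (hd.mul_snd (pow_mem hc _)).comp he, ?_⟩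
    have hc' : c ^ (w.length + 1) * c⁻¹ ^ w.length = c := by
      rcases eq_or_ne c 0 with rfl | hc0
      · simp
      · rw [pow_succ', mul_assoc, ← mul_pow, mul_inv_cancel₀ hc0, one_pow, mul_one]
    simp only [composeWord, hgi, hw, comp, List.length_cons, Prod.smul_mk, Prod.smul_fst,
      Prod.smul_snd, smul_eq_mul, Prod.mk.injEq]
    constructor
    · ring
    · linear_combination -d.2 * hc'

lemma norm_composeWord_fst (hc : c⁻¹ ∈ gaussianIntegers)
    (hg : ∀ i, ∃ d, IsDeck d ∧ g i = c • d) (w : List ι) :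
    ‖(composeWord g w).1‖ = ‖c‖ ^ w.length := by
  obtain ⟨d, hd, hw⟩ := exists_isDeck_composeWord_eq_smul g hc hg w
  rw [hw, Prod.smul_fst, smul_eq_mul, norm_mul, norm_pow, hd.norm_fst, mul_one]

lemma composeWord_fst_ne_zero (hc0 : c ≠ 0) (hc : c⁻¹ ∈ gaussianIntegers)
    (hg : ∀ i, ∃ d, IsDeck d ∧ g i = c • d) (w : List ι) : (composeWord g w).1 ≠ 0 := by
  rw [← norm_ne_zero_iff, norm_composeWord_fst g hc hg]
  exact pow_ne_zero _ (norm_ne_zero_iff.2 hc0)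

lemma volume_image_composeWord (hc : c⁻¹ ∈ gaussianIntegers)
    (hg : ∀ i, ∃ d, IsDeck d ∧ g i = c • d) (w : List ι) (s : Set ℂ) :
    volume ((composeWord g w).toFun '' s) = ENNReal.ofReal (‖c‖ ^ 2) ^ w.length * volume s := by
  rw [volume_image_toFun, norm_composeWord_fst g hc hg, pow_right_comm,
    ENNReal.ofReal_pow (sq_nonneg _), mul_comm]

lemma image_composeWord_subset (hK : K = ⋃ i, (g i).toFun '' K) (w : List ι) :
    (composeWord g w).toFun '' K ⊆ K := by
  induction w with
  | nil => simp [composeWord, toFun_one]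
  | cons i w ih =>
    rw [composeWord, image_toFun_comp]
    exact (image_mono ih).trans ((subset_iUnion (fun j => (g j).toFun '' K) i).trans hK.ge)

lemma iUnion_image_composeWord (hK : K = ⋃ i, (g i).toFun '' K) (n : ℕ) :
    ⋃ w : List.Vector ι n, (composeWord g w.toList).toFun '' K = K := by
  induction n with
  | zero =>
    have : Nonempty (List.Vector ι 0) := ⟨List.Vector.nil⟩
    simp only [List.Vector.eq_nil, List.Vector.toList_nil, composeWord, toFun_one, image_id]
    exact iUnion_const K
  | succ n ih =>
    have hcons : Function.Surjective fun x : ι × List.Vector ι n => x.1 ::ᵥ x.2 := fun w =>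
      let ⟨i, v, h⟩ := List.Vector.exists_eq_cons w
      ⟨(i, v), h.symm⟩
    conv_rhs => rw [hK, ← ih]
    rw [← hcons.iUnion_comp]
    ext z
    simp only [List.Vector.toList_cons, composeWord, image_toFun_comp, image_iUnion, mem_iUnion,
      Prod.exists]

lemma volume_image_composeWord_inter_eq_zero [Fintype ι] (hc : c⁻¹ ∈ gaussianIntegers)
    (hg : ∀ i, ∃ d, IsDeck d ∧ g i = c • d) (hcard : Fintype.card ι * ‖c‖ ^ 2 = 1)
    (hKc : IsCompact K) (hK : K = ⋃ i, (g i).toFun '' K) {w w' : List ι}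
    (hlen : w.length = w'.length) (hne : w ≠ w') :
    volume ((composeWord g w).toFun '' K ∩ (composeWord g w').toFun '' K) = 0 := by
  let piece (v : List.Vector ι w.length) := (composeWord g v.toList).toFun '' K
  have hsum : ∑ v, volume (piece v) = volume K := by
    simp only [piece, volume_image_composeWord g hc hg, List.Vector.toList_length,
      Finset.sum_const, Finset.card_univ, card_vector, nsmul_eq_mul, ← mul_assoc, Nat.cast_pow,
      ← mul_pow]
    rw [← ENNReal.ofReal_natCast, ← ENNReal.ofReal_mul (Nat.cast_nonneg _), hcard,
      ENNReal.ofReal_one, one_pow, one_mul]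
  refine measure_inter_eq_zero_of_measure_iUnion_eq_sum (s := piece) (i := ⟨w, rfl⟩)
    (j := ⟨w', hlen.symm⟩) (fun v => ?_) (hsum ▸ hKc.measure_lt_top.ne) ?_
    fun h => hne (congrArg List.Vector.toList h)
  · exact (hKc.image (continuous_toFun _)).isClosed.measurableSet
  · rw [iUnion_image_composeWord g hK, hsum]

noncomputable def tile (F w : List ι) : AffinePair :=
  (composeWord g F).inv.comp (composeWord g w)

def tiles (F : List ι) : Set (ℂ → ℂ) :=
  range fun w : List.Vector ι F.length => (tile g F w.toList).toFun

lemma isDeck_tile (hc0 : c ≠ 0) (hc : c⁻¹ ∈ gaussianIntegers)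
    (hg : ∀ i, ∃ d, IsDeck d ∧ g i = c • d) {F w : List ι} (hlen : w.length = F.length) :
    IsDeck (tile g F w) := by
  obtain ⟨d, hd, hF⟩ := exists_isDeck_composeWord_eq_smul g hc hg F
  obtain ⟨e, he, hw⟩ := exists_isDeck_composeWord_eq_smul g hc hg w
  rw [tile, hF, hw, hlen, smul_inv_comp_smul (pow_ne_zero _ hc0) hd.fst_ne_zero]
  exact hd.inv.comp he

lemma tiles_subset_tiles_append (hc0 : c ≠ 0) (hc : c⁻¹ ∈ gaussianIntegers)
    (hg : ∀ i, ∃ d, IsDeck d ∧ g i = c • d) (u F : List ι) : tiles g F ⊆ tiles g (u ++ F) := by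
  rintro _ ⟨w, rfl⟩
  refine ⟨⟨u ++ w.toList, by simp⟩, ?_⟩
  simp only [List.Vector.toList_mk, tile, composeWord_append,
    inv_comp_comp_cancel (composeWord_fst_ne_zero g hc0 hc hg u)
      (composeWord_fst_ne_zero g hc0 hc hg F)]

lemma iUnion_image_tiles (hc0 : c ≠ 0) (hc : c⁻¹ ∈ gaussianIntegers)
    (hg : ∀ i, ∃ d, IsDeck d ∧ g i = c • d) (hK : K = ⋃ i, (g i).toFun '' K) (F : List ι) :
    ⋃ t ∈ tiles g F, t '' K = (composeWord g F).toFun ⁻¹' K := by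
  simp only [tiles, biUnion_range, tile,
    image_toFun_inv_comp (composeWord_fst_ne_zero g hc0 hc hg F), ← preimage_iUnion,
    iUnion_image_composeWord g hK]

lemma pairwise_volume_image_inter_tiles [Fintype ι] (hc0 : c ≠ 0)
    (hc : c⁻¹ ∈ gaussianIntegers) (hg : ∀ i, ∃ d, IsDeck d ∧ g i = c • d)
    (hcard : Fintype.card ι * ‖c‖ ^ 2 = 1)
    (hKc : IsCompact K) (hK : K = ⋃ i, (g i).toFun '' K) (F : List ι) :
    (tiles g F).Pairwise fun t t' => volume (t '' K ∩ t' '' K) = 0 := by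
  have hF := composeWord_fst_ne_zero g hc0 hc hg F
  rintro _ ⟨w, rfl⟩ _ ⟨w', rfl⟩ hne
  simp only [tile, image_toFun_inv_comp hF, ← preimage_inter]
  refine volume_preimage_toFun_eq_zero hF
    (volume_image_composeWord_inter_eq_zero g hc hg hcard hKc hK (by simp) fun h => hne ?_)
  simp only [h]

lemma image_closedBall_composeWord_append_subset (hc : c⁻¹ ∈ gaussianIntegers)
    (hg : ∀ i, ∃ d, IsDeck d ∧ g i = c • d) (hc1 : ‖c‖ ≤ 1) (hKc : IsCompact K)
    (hK : K = ⋃ i, (g i).toFun '' K) {u r : List ι} {z : ℂ}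
    (hz : z ∈ (composeWord g u).toFun '' K) (R : ℝ) :
    (composeWord g (u ++ r)).toFun '' closedBall z R ⊆
      closedBall z (‖c‖ ^ u.length * (R + diam K)) := by
  obtain ⟨y, hy, rfl⟩ := hz
  set z := (composeWord g u).toFun y
  have hzK : z ∈ K := image_composeWord_subset g hK u ⟨y, hy, rfl⟩
  have hrzK : (composeWord g r).toFun z ∈ K := image_composeWord_subset g hK r ⟨z, hzK, rfl⟩
  rintro _ ⟨x, hx, rfl⟩
  rw [mem_closedBall] at hx ⊢
  have hscale : dist ((composeWord g (u ++ r)).toFun x) ((composeWord g (u ++ r)).toFun z) ≤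
      ‖c‖ ^ u.length * R := by
    rw [dist_toFun, norm_composeWord_fst g hc hg, List.length_append, pow_add, mul_assoc]
    gcongr
    exact (mul_le_of_le_one_left dist_nonneg (pow_le_one₀ (norm_nonneg c) hc1)).trans hx
  have hshift : dist ((composeWord g (u ++ r)).toFun z) z ≤ ‖c‖ ^ u.length * diam K := by
    rw [composeWord_append, toFun_comp, Function.comp_apply, dist_toFun,
      norm_composeWord_fst g hc hg]
    gcongr
    exact dist_le_diam_of_mem hKc.isBounded hrzK hy
  calc _ ≤ _ := dist_triangle _ ((composeWord g (u ++ r)).toFun z) z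
    _ ≤ _ := add_le_add hscale hshift
    _ = _ := by ring

lemma volume_closedBall_diff_preimage_composeWord_append_le (hc : c⁻¹ ∈ gaussianIntegers)
    (hg : ∀ i, ∃ d, IsDeck d ∧ g i = c • d) (hc1 : ‖c‖ ≤ 1) (hKc : IsCompact K)
    (hK : K = ⋃ i, (g i).toFun '' K) {u r : List ι} {z : ℂ}
    (hz : z ∈ (composeWord g u).toFun '' K) (R : ℝ) :
    ENNReal.ofReal (‖c‖ ^ 2) ^ (u ++ r).length *
        volume (closedBall z R \ (composeWord g (u ++ r)).toFun ⁻¹' K) ≤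
      volume (closedBall z (‖c‖ ^ u.length * (R + diam K)) \ K) := by
  rw [← volume_image_composeWord g hc hg, image_sdiff_preimage]
  exact measure_mono (sdiff_subset_sdiff_left
    (image_closedBall_composeWord_append_subset g hc hg hc1 hKc hK hz R))

lemma exists_volume_closedBall_diff_preimage_composeWord_append_le (hc0 : c ≠ 0)
    (hc : c⁻¹ ∈ gaussianIntegers) (hg : ∀ i, ∃ d, IsDeck d ∧ g i = c • d) (hc1 : ‖c‖ < 1)
    (hKc : IsCompact K) (hK : K = ⋃ i, (g i).toFun '' K) {z : ℂ} (hzK : z ∈ K)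
    (hz : Tendsto (fun ρ => volume (closedBall z ρ \ K) / volume (closedBall z ρ)) (𝓝[>] 0)
      (𝓝 0))
    (r : List ι) {R : ℝ} (hR : 0 < R) {ε : ℝ≥0∞} (hε : 0 < ε) :
    ∃ u, volume (closedBall z R \ (composeWord g (u ++ r)).toFun ⁻¹' K) ≤ ε := by
  -- For `ρₘ = ‖c‖ᵐ D`, the quantity to bound is at most `a⁻ⁿ |B(0, D)|` times the density of
  -- `Kᶜ` in `B(z, ρₘ)`, which tends to `0`.
  set a := ENNReal.ofReal (‖c‖ ^ 2)
  set D := R + diam K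
  have ha0 : a ≠ 0 := by simpa [a] using hc0
  have hD : 0 < D := add_pos_of_pos_of_nonneg hR diam_nonneg
  have hρ : Tendsto (fun m : ℕ => ‖c‖ ^ m * D) atTop (𝓝[>] 0) :=
    tendsto_nhdsWithin_iff.2 ⟨by simpa using
      (tendsto_pow_atTop_nhds_zero_of_lt_one (norm_nonneg c) hc1).mul_const D,
      Eventually.of_forall fun m => mem_Ioi.2 (by positivity)⟩
  have hball (m : ℕ) :
      volume (closedBall z (‖c‖ ^ m * D)) = a ^ m * volume (closedBall (0 : ℂ) D) := by
    rw [Measure.addHaar_closedBall_mul volume z (by positivity) hD.le, finrank_real_complex,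
      pow_right_comm, ENNReal.ofReal_pow (sq_nonneg _)]
  have hlim := ENNReal.Tendsto.const_mul (hz.comp hρ)
    (Or.inr (measure_closedBall_lt_top (μ := volume) (x := (0 : ℂ)) (r := D)).ne)
  rw [mul_zero] at hlim
  obtain ⟨m, hm⟩ := (hlim.eventually
    (gt_mem_nhds (ENNReal.mul_pos (pow_ne_zero r.length ha0) hε.ne').bot_lt)).exists
  obtain ⟨u, hu⟩ := mem_iUnion.1 ((iUnion_image_composeWord g hK m).symm ▸ hzK)
  refine ⟨u.toList, (ENNReal.mul_le_mul_iff_right (pow_ne_zero (u.toList ++ r).length ha0)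
    (ENNReal.pow_ne_top ENNReal.ofReal_ne_top)).1 ?_⟩
  calc a ^ (u.toList ++ r).length * volume (closedBall z R \ _)
      ≤ volume (closedBall z (‖c‖ ^ m * D) \ K) := by
        have := volume_closedBall_diff_preimage_composeWord_append_le g hc hg hc1.le hKc hK
          (r := r) hu R
        rwa [u.toList_length] at this
    _ = a ^ m * (volume (closedBall (0 : ℂ) D) *
          (volume (closedBall z (‖c‖ ^ m * D) \ K) / volume (closedBall z (‖c‖ ^ m * D)))) := by
        rw [← mul_assoc, ← hball, ENNReal.mul_div_cancel
          (measure_closedBall_pos volume z (by positivity)).ne' measure_closedBall_lt_top.ne]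
    _ ≤ a ^ m * (a ^ r.length * ε) := by gcongr a ^ m * ?_; exact hm.le
    _ = a ^ (u.toList ++ r).length * ε := by
        rw [List.length_append, u.toList_length, pow_add, mul_assoc]

end Words

theorem exists_deck_tiling {ι : Type*} [Fintype ι] (g : ι → AffinePair) {c : ℂ} {K : Set ℂ}
    (hc : c⁻¹ ∈ gaussianIntegers) (hc1 : ‖c‖ < 1) (hcard : Fintype.card ι * ‖c‖ ^ 2 = 1)
    (hg : ∀ i, ∃ d, IsDeck d ∧ g i = c • d) (hKc : IsCompact K)
    (hK : K = ⋃ i, (g i).toFun '' K) (hpos : 0 < volume K) :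
    ∃ T : Set (ℂ → ℂ), (∀ t ∈ T, ∃ p, IsDeck p ∧ t = p.toFun) ∧ ⋃ t ∈ T, t '' K = univ ∧
      T.Pairwise fun t t' => volume (t '' K ∩ t' '' K) = 0 := by
  have hc0 : c ≠ 0 := by
    rintro rfl
    simp at hcard
  obtain ⟨z, hzK, hz⟩ := exists_density_point volume hKc.isClosed.measurableSet hpos
  obtain ⟨F, hF, hFcover⟩ := exists_nested_words volume z
    (fun w => (composeWord g w).toFun ⁻¹' K) fun r R hR ε hε =>
      exists_volume_closedBall_diff_preimage_composeWord_append_le g hc0 hc hg hc1 hKc hK hzK hz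
        r hR hε
  have hmono : Monotone fun k => tiles g (F k) := monotone_nat_of_le_succ fun k => by
    obtain ⟨u, hu⟩ := hF k
    simpa only [hu] using tiles_subset_tiles_append g hc0 hc hg u (F k)
  have hdeck : ∀ t ∈ ⋃ k, tiles g (F k), ∃ p, IsDeck p ∧ t = p.toFun := by
    simp only [mem_iUnion]
    rintro _ ⟨k, w, rfl⟩
    exact ⟨_, isDeck_tile g hc0 hc hg (by simp), rfl⟩
  have hnull : volume (⋃ t ∈ ⋃ k, tiles g (F k), t '' K)ᶜ = 0 := by
    simp only [biUnion_iUnion, iUnion_image_tiles g hc0 hc hg hK]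
    exact measure_compl_iUnion_eq_zero volume z hFcover
  have hclosed := isClosed_biUnion_image_of_isDeck hKc hdeck
  exact ⟨⋃ k, tiles g (F k), hdeck,
    compl_empty_iff.1 (hclosed.isOpen_compl.measure_zero_iff_eq_empty.1 hnull),
    (pairwise_iUnion hmono.directed_le).2 fun k =>
      pairwise_volume_image_inter_tiles g hc0 hc hg hcard hKc hK (F k)⟩

end AffinePair

lemma inv_one_add_I_div_two : ((1 + I) / 2)⁻¹ = 1 - I :=
  inv_eq_of_mul_eq_one_right (by linear_combination (-1 / 2 : ℂ) * I_sq)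

lemma norm_one_add_I_div_two_sq : ‖(1 + I) / 2‖ ^ 2 = 1 / 2 := by
  rw [← normSq_eq_norm_sq, normSq_apply]
  norm_num

lemma exists_isDeck_eq_one_add_I_div_two_smul {μ β : ℂ}
    (hμ : μ ∈ ({(1 + I) / 2, (1 - I) / 2, (-1 + I) / 2, (-1 - I) / 2} : Set ℂ))
    (hβ : ∃ a b : ℤ, β = (1 + I) * (a + b * I)) :
    ∃ d, AffinePair.IsDeck d ∧ ((μ, β) : AffinePair) = ((1 + I) / 2) • d := by
  obtain ⟨a, b, rfl⟩ := hβ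
  refine ⟨((1 - I) * μ, 2 * (a + b * I)),
    ⟨pow_four_eq_one_iff.2 ?_, a + b * I, mem_gaussianIntegers.2 ⟨a, b, rfl⟩, rfl⟩, ?_⟩
  · simp only [mem_insert_iff, mem_singleton_iff] at hμ ⊢
    rcases hμ with rfl | rfl | rfl | rfl
    · exact Or.inl (by linear_combination (-1 / 2 : ℂ) * I_sq)
    · exact Or.inr (Or.inr (Or.inr (by linear_combination (1 / 2 : ℂ) * I_sq)))
    · exact Or.inr (Or.inl (by linear_combination (-1 / 2 : ℂ) * I_sq))
    · exact Or.inr (Or.inr (Or.inl (by linear_combination (1 / 2 : ℂ) * I_sq)))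
  · ext
    · simp only [Prod.smul_fst, smul_eq_mul]
      linear_combination (μ / 2) * I_sq
    · simp only [Prod.smul_snd, smul_eq_mul]
      ring

theorem lattes_tiling_general (μ₁ μ₂ : ℂ)
    (hμ₁ : μ₁ ∈ ({(1 + Complex.I) / 2, (1 - Complex.I) / 2,
                  (-1 + Complex.I) / 2, (-1 - Complex.I) / 2} : Set ℂ))
    (hμ₂ : μ₂ ∈ ({(1 + Complex.I) / 2, (1 - Complex.I) / 2,
                  (-1 + Complex.I) / 2, (-1 - Complex.I) / 2} : Set ℂ))
    (β₁ β₂ : ℂ)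
    (hβ₁ : ∃ a b : ℤ, β₁ = (1 + Complex.I) * ((a : ℂ) + (b : ℂ) * Complex.I))
    (hβ₂ : ∃ a b : ℤ, β₂ = (1 + Complex.I) * ((a : ℂ) + (b : ℂ) * Complex.I))
    (K : Set ℂ) (hc : IsCompact K)
    (hK : K = (fun z : ℂ => μ₁ * z + β₁) '' K ∪
              (fun z : ℂ => μ₂ * z + β₂) '' K)
    (hpos : 0 < volume K) :
    ∃ T : Set (ℂ → ℂ),
      (∀ t ∈ T, ∃ α β : ℂ, α ∈ ({1, Complex.I, -1, -Complex.I} : Set ℂ) ∧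
        (∃ a b : ℤ, β = (a : ℂ) + (b : ℂ) * Complex.I) ∧
        t = fun z => α * z + 2 * β) ∧
      (⋃ t ∈ T, t '' K) = Set.univ ∧
      ∀ t ∈ T, ∀ t' ∈ T, t ≠ t' → volume (t '' K ∩ t' '' K) = 0 := by
  let g : Fin 2 → AffinePair := ![(μ₁, β₁), (μ₂, β₂)]
  have hg : ∀ i, ∃ d, AffinePair.IsDeck d ∧ g i = ((1 + I) / 2) • d := Fin.forall_fin_two.2
    ⟨exists_isDeck_eq_one_add_I_div_two_smul hμ₁ hβ₁,
      exists_isDeck_eq_one_add_I_div_two_smul hμ₂ hβ₂⟩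
  have hKg : K = ⋃ i, (g i).toFun '' K :=
    hK.trans (by ext; simp [g, AffinePair.toFun, Fin.exists_fin_two])
  obtain ⟨T, hdeck, hcover, hnull⟩ := AffinePair.exists_deck_tiling g
    (inv_one_add_I_div_two ▸ mem_gaussianIntegers.2 ⟨1, -1, by push_cast; ring⟩)
    ((sq_lt_one_iff₀ (norm_nonneg _)).1 (by rw [norm_one_add_I_div_two_sq]; norm_num))
    (by rw [norm_one_add_I_div_two_sq, Fintype.card_fin]; norm_num) hg hc hKg hpos
  refine ⟨T, fun t ht => ?_, hcover, hnull⟩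
  obtain ⟨p, hp, rfl⟩ := hdeck t ht
  exact hp.exists_toFun_eq

/-- Instance of the Tiling Theorem for the Lattès map: if the attractor `K` of
`gⱼ(z) = μⱼ z + βⱼ` (multipliers in `{(1±i)/2,(-1±i)/2}`, translations in
`(1+i)ℤ[i]`) has positive two-dimensional Lebesgue measure, then `K` tiles `ℂ`
under deck transformations `z ↦ αz + 2β` with `α⁴ = 1`, `β ∈ ℤ[i]`. -/
theorem lattes_tiling (μ₁ μ₂ : ℂ)
    (hμ₁ : μ₁ ∈ ({(1 + Complex.I) / 2, (1 - Complex.I) / 2,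
                  (-1 + Complex.I) / 2, (-1 - Complex.I) / 2} : Set ℂ))
    (hμ₂ : μ₂ ∈ ({(1 + Complex.I) / 2, (1 - Complex.I) / 2,
                  (-1 + Complex.I) / 2, (-1 - Complex.I) / 2} : Set ℂ))
    (β₁ β₂ : ℂ)
    (hβ₁ : ∃ a b : ℤ, β₁ = (1 + Complex.I) * ((a : ℂ) + (b : ℂ) * Complex.I))
    (hβ₂ : ∃ a b : ℤ, β₂ = (1 + Complex.I) * ((a : ℂ) + (b : ℂ) * Complex.I))
    (K : Set ℂ) (hne : K.Nonempty) (hc : IsCompact K)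
    (hK : K = (fun z : ℂ => μ₁ * z + β₁) '' K ∪
              (fun z : ℂ => μ₂ * z + β₂) '' K)
    (hpos : 0 < volume K) :
    ∃ T : Set (ℂ → ℂ),
      (∀ t ∈ T, ∃ α β : ℂ, α ∈ ({1, Complex.I, -1, -Complex.I} : Set ℂ) ∧
        (∃ a b : ℤ, β = (a : ℂ) + (b : ℂ) * Complex.I) ∧
        t = fun z => α * z + 2 * β) ∧
      (⋃ t ∈ T, t '' K) = Set.univ ∧
      ∀ t ∈ T, ∀ t' ∈ T, t ≠ t' → volume (t '' K ∩ t' '' K) = 0 :=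
  lattes_tiling_general μ₁ μ₂ hμ₁ hμ₂ β₁ β₂ hβ₁ hβ₂ K hc hK hpos
end

section
/- Let β = (1 + √13)/2 and I = [−β, β] ⊂ ℝ; the maps g_1(x) = √(x + 3) and g_2(x) = −√(x + 3) are contractions mapping I into I. Every continuous map π : {1,2}^ℕ → I satisfying π(1ω) = √(π(ω) + 3) and π(2ω) = −√(π(ω) + 3) for all ω ∈ {1,2}^ℕ is injective, hence a homeomorphism of {1,2}^ℕ onto its image. -/
/-!
On `I = [-β, β]` we have `x + 3 ≥ 3 - β > 1/2`, so both branches `±√(x + 3)` stay at distance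
at least `7/10` from `0`, which makes them Lipschitz with constant `(2 · 7/10)⁻¹ = 5/7`.
Injectivity of a coding map needs only that the two branches are injective on `(-3, ∞)` with
disjoint images (one positive, one nonpositive): equal codes force equal first symbols and equal
codes of the tails, hence equal symbols everywhere. A continuous injection of the compact space
`{1,2}^ℕ` into `ℝ` is a homeomorphism onto its image.
-/

/-- Prepending a symbol to a sequence in `{1,2}^ℕ`. -/
def prepend (i : Fin 2) (ω : ℕ → Fin 2) : ℕ → Fin 2 :=
  fun k => if k = 0 then i else ω (k - 1)

open Set Function NNReal

local notation "β" => (1 + Real.sqrt 13) / 2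

theorem prepend_head_tail (ω : ℕ → Fin 2) : prepend (ω 0) (fun n => ω (n + 1)) = ω := by
  funext k
  cases k <;> simp [prepend]

theorem injective_of_map_prepend {α : Type*} {π : (ℕ → Fin 2) → α} {g : Fin 2 → α → α}
    {S : Set α} (hπS : ∀ ω, π ω ∈ S) (hg : ∀ i, InjOn (g i) S)
    (hdisj : ∀ x ∈ S, ∀ y ∈ S, g 0 x ≠ g 1 y) (hπ : ∀ i ω, π (prepend i ω) = g i (π ω)) :
    Injective π := by
  have branch_eq : ∀ i j, ∀ x ∈ S, ∀ y ∈ S, g i x = g j y → i = j ∧ x = y := by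
    intro i j x hx y hy h
    fin_cases i <;> fin_cases j
    · exact ⟨rfl, hg 0 hx hy h⟩
    · exact absurd h (hdisj x hx y hy)
    · exact absurd h.symm (hdisj y hy x hx)
    · exact ⟨rfl, hg 1 hx hy h⟩
  have head_tail_eq : ∀ ω ω', π ω = π ω' →
      ω 0 = ω' 0 ∧ π (fun n => ω (n + 1)) = π (fun n => ω' (n + 1)) := by
    intro ω ω' h
    rw [← prepend_head_tail ω, ← prepend_head_tail ω', hπ, hπ] at h
    exact branch_eq _ _ _ (hπS _) _ (hπS _) h
  have coord_eq : ∀ n ω ω', π ω = π ω' → ω n = ω' n := by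
    intro n
    induction n with
    | zero => exact fun ω ω' h => (head_tail_eq ω ω' h).1
    | succ n ih => exact fun ω ω' h => ih _ _ (head_tail_eq ω ω' h).2
  exact fun ω ω' h => funext fun n => coord_eq n ω ω' h

theorem lipschitzOnWith_sqrt_Ici {r : ℝ≥0} (hr : 0 < r) :
    LipschitzOnWith (2 * r)⁻¹ Real.sqrt (Ici ((r : ℝ) ^ 2)) := by
  refine LipschitzOnWith.of_dist_le_mul fun x (hx : _ ≤ x) y (hy : _ ≤ y) => ?_
  have hr : (0 : ℝ) < r := hr
  have hrx : (r : ℝ) ≤ √x := Real.le_sqrt_of_sq_le hx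
  have hry : (r : ℝ) ≤ √y := Real.le_sqrt_of_sq_le hy
  have hdiff : (√x + √y) * (√x - √y) = x - y := by
    rw [← mul_self_sub_mul_self, Real.mul_self_sqrt (by nlinarith),
      Real.mul_self_sqrt (by nlinarith)]
  rw [Real.dist_eq, Real.dist_eq, NNReal.coe_inv, NNReal.coe_mul, NNReal.coe_ofNat]
  calc |√x - √y| = (2 * r)⁻¹ * (2 * r * |√x - √y|) :=
        (inv_mul_cancel_left₀ (by positivity) _).symm
    _ ≤ (2 * r)⁻¹ * ((√x + √y) * |√x - √y|) := by gcongr; linarith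
    _ = (2 * r)⁻¹ * |x - y| := by
      rw [← hdiff, abs_mul, abs_of_pos (by linarith : 0 < √x + √y)]

theorem sqrt_thirteen_lt_four : √13 < 4 := by
  rw [Real.sqrt_lt' (by norm_num)]; norm_num

theorem beta_sq : β ^ 2 = β + 3 := by
  have h : √13 ^ 2 = 13 := Real.sq_sqrt (by norm_num)
  linear_combination h / 4

theorem Icc_neg_beta_subset_Ioi : Icc (-β) β ⊆ Ioi (-3) := by
  intro x hx
  have := sqrt_thirteen_lt_four
  exact lt_of_lt_of_le (by linarith) hx.1

theorem sqrt_add_three_le_beta {x : ℝ} (hx : x ≤ β) : √(x + 3) ≤ β := by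
  rw [Real.sqrt_le_left (by positivity), beta_sq]
  linarith

theorem seven_tenths_sq_le_add_three {x : ℝ} (hx : -β ≤ x) :
    ((7 / 10 : ℝ≥0) : ℝ) ^ 2 ≤ x + 3 := by
  have := sqrt_thirteen_lt_four
  push_cast
  linarith

theorem lipschitzOnWith_sqrt_add_three :
    LipschitzOnWith (5 / 7) (fun x => √(x + 3)) (Icc (-β) β) := by
  have h := (lipschitzOnWith_sqrt_Ici (r := 7 / 10) (by norm_num)).comp
    (isometry_add_right (3 : ℝ)).lipschitz.lipschitzOnWith
    (fun x (hx : x ∈ Icc (-β) β) => seven_tenths_sq_le_add_three hx.1)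
  convert h using 1
  · norm_num
  · rfl

theorem injOn_sqrt_add (c : ℝ) : InjOn (fun x => √(x + c)) (Ioi (-c)) := by
  intro x (hx : -c < x) y (hy : -c < y) h
  have := (Real.sqrt_inj (by linarith) (by linarith)).1 h
  linarith

theorem sqrt_add_ne_neg_sqrt_add {c x : ℝ} (hx : -c < x) (y : ℝ) : √(x + c) ≠ -√(y + c) := by
  have := Real.sqrt_pos.2 (by linarith : 0 < x + c)
  have := Real.sqrt_nonneg (y + c)
  linarith

/-- For `f(z) = z² - 3`: with `β = (1 + √13)/2` and `I = [-β, β]`, the two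
inverse branches `g₁(x) = √(x+3)`, `g₂(x) = -√(x+3)` are contractions mapping
`I` into `I`, and every continuous coding map `π : {1,2}^ℕ → I` with
`π(1ω) = √(π(ω)+3)`, `π(2ω) = -√(π(ω)+3)` is injective, hence a homeomorphism
onto its image. -/
theorem canonical_coding_z_sq_sub_three_injective :
    (∀ x ∈ Set.Icc (-((1 + Real.sqrt 13) / 2)) ((1 + Real.sqrt 13) / 2),
      Real.sqrt (x + 3) ∈
        Set.Icc (-((1 + Real.sqrt 13) / 2)) ((1 + Real.sqrt 13) / 2) ∧
      -Real.sqrt (x + 3) ∈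
        Set.Icc (-((1 + Real.sqrt 13) / 2)) ((1 + Real.sqrt 13) / 2)) ∧
    (∃ c : NNReal, c < 1 ∧
      LipschitzOnWith c (fun x : ℝ => Real.sqrt (x + 3))
        (Set.Icc (-((1 + Real.sqrt 13) / 2)) ((1 + Real.sqrt 13) / 2)) ∧
      LipschitzOnWith c (fun x : ℝ => -Real.sqrt (x + 3))
        (Set.Icc (-((1 + Real.sqrt 13) / 2)) ((1 + Real.sqrt 13) / 2))) ∧
    (∀ π : (ℕ → Fin 2) → ℝ, Continuous π →
      (∀ ω, π ω ∈ Set.Icc (-((1 + Real.sqrt 13) / 2)) ((1 + Real.sqrt 13) / 2)) →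
      (∀ ω, π (prepend 0 ω) = Real.sqrt (π ω + 3)) →
      (∀ ω, π (prepend 1 ω) = -Real.sqrt (π ω + 3)) →
      Function.Injective π ∧
        ∃ e : (ℕ → Fin 2) ≃ₜ Set.range π, ∀ ω, (e ω : ℝ) = π ω) := by
  refine ⟨fun x hx => ?_, ⟨5 / 7, by norm_num, lipschitzOnWith_sqrt_add_three,
    lipschitzOnWith_sqrt_add_three.neg⟩, fun π hπ hI h0 h1 => ?_⟩
  · have hle := sqrt_add_three_le_beta hx.2
    have hnonneg := Real.sqrt_nonneg (x + 3)
    exact ⟨⟨by linarith, hle⟩, ⟨by linarith, by linarith⟩⟩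
  have hinj : Injective π :=
    injective_of_map_prepend (g := ![fun x => √(x + 3), fun x => -√(x + 3)])
      (fun ω => Icc_neg_beta_subset_Ioi (hI ω))
      (Fin.forall_fin_two.2 ⟨injOn_sqrt_add 3, neg_injective.comp_injOn (injOn_sqrt_add 3)⟩)
      (fun x hx y _ => sqrt_add_ne_neg_sqrt_add hx y) (Fin.forall_fin_two.2 ⟨h0, h1⟩)
  exact ⟨hinj, (hπ.isClosedEmbedding hinj).isEmbedding.toHomeomorph, fun _ => rfl⟩
end

section
/- Let X be a topological space, d ≥ 1 an integer, and g_1, …, g_d : X → X injective maps. Suppose π : {1, …, d}^ℕ → X is continuous and satisfies π(iω) = g_i(π(ω)) for every symbol i ∈ {1, …, d} and every ω ∈ {1, …, d}^ℕ. Then the image of π is either a single point or has no isolated points (so if X is Hausdorff, the image is a singleton or a perfect compact set). -/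
/-- The image of a coding map is a singleton or has no isolated points: if
`g₁, …, g_d : X → X` are injective and `π : {1,…,d}^ℕ → X` is continuous with
`π(iω) = gᵢ(π(ω))`, then the range of `π` is either a single point or every
point of the range lies in the closure of the rest of the range. -/
theorem coding_image_singleton_or_perfect (X : Type*) [TopologicalSpace X]
    (d : ℕ) (hd : 1 ≤ d) (g : Fin d → X → X)
    (hg : ∀ i, Function.Injective (g i))
    (π : (ℕ → Fin d) → X) (hcont : Continuous π)
    (hπ : ∀ (i : Fin d) (ω : ℕ → Fin d),
      π (fun k => if k = 0 then i else ω (k - 1)) = g i (π ω)) :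
    (∃ x, Set.range π = {x}) ∨
    (∀ x ∈ Set.range π, x ∈ closure (Set.range π \ {x})) := by
  by_cases hc : ∀ a b : ℕ → Fin d, π a = π b
  · left
    refine ⟨π (fun _ => ⟨0, hd⟩), ?_⟩
    ext x
    constructor
    · rintro ⟨a, rfl⟩; exact hc a _
    · rintro rfl; exact ⟨_, rfl⟩
  · right
    push_neg at hc
    obtain ⟨a, b, hab⟩ := hc
    rintro x ⟨ω, rfl⟩
    -- the "append n symbols of ω in front" operation
    set appn : ℕ → (ℕ → Fin d) → (ℕ → Fin d) → (ℕ → Fin d) :=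
      fun n ρ τ k => if k < n then ρ k else τ (k - n) with happn
    -- key injectivity claim
    have key : ∀ (n : ℕ) (ρ τ τ' : ℕ → Fin d), π τ ≠ π τ' →
        π (appn n ρ τ) ≠ π (appn n ρ τ') := by
      intro n
      induction n with
      | zero =>
        intro ρ τ τ' h
        have e : ∀ σ : ℕ → Fin d, appn 0 ρ σ = σ := by
          intro σ; funext k; simp [happn]
        rw [e, e]; exact h
      | succ n ih =>
        intro ρ τ τ' h
        have e : ∀ σ : ℕ → Fin d, appn (n + 1) ρ σ =
            (fun k => if k = 0 then ρ 0 else appn n (fun j => ρ (j + 1)) σ (k - 1)) := by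
          intro σ
          funext k
          rcases Nat.eq_zero_or_pos k with rfl | hk
          · simp [happn]
          · have hk0 : k ≠ 0 := Nat.pos_iff_ne_zero.mp hk
            simp only [happn, hk0, if_false]
            by_cases hkn : k < n + 1
            · have : k - 1 < n := by omega
              simp [this, hkn, Nat.sub_add_cancel hk]
            · have h1 : ¬ k - 1 < n := by omega
              simp only [hkn, if_false, h1, Nat.sub_sub]
              rw [Nat.add_comm]
        rw [e, e, hπ, hπ]
        intro hcontra
        exact ih (fun j => ρ (j + 1)) τ τ' h (hg (ρ 0) hcontra)
    -- choose for each n a tail giving a value ≠ π ω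
    have choice : ∀ n : ℕ, ∃ τ : ℕ → Fin d, π (appn n ω τ) ≠ π ω := by
      intro n
      by_contra hco
      push_neg at hco
      exact key n ω a b hab ((hco a).trans (hco b).symm)
    choose τ hτ using choice
    set σ : ℕ → (ℕ → Fin d) := fun n => appn n ω (τ n) with hσ
    have hconv : Filter.Tendsto σ Filter.atTop (nhds ω) := by
      rw [tendsto_pi_nhds]
      intro k
      refine tendsto_const_nhds.congr' ?_
      filter_upwards [Filter.eventually_ge_atTop (k + 1)] with n hn
      have : k < n := hn
      simp [hσ, happn, this]
    refine mem_closure_of_tendsto (hcont.continuousAt.tendsto.comp hconv) ?_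
    filter_upwards with n
    exact ⟨⟨σ n, rfl⟩, hτ n⟩
end
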